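/- arXiv:2009.13989 — 8 statements merged into one kernel-verified Lean document; each statement's English description precedes it below -/
import Mathlib

section
/- Under the Setting, for every θ ∈ Θ and every n ∈ ℕ₀ the map {0,1,…,K} × 𝒪 × Ω ∋ (k,x,ω) ↦ V^θ_{k,n}(x,ω) ∈ ℝ is measurable with respect to the product sigma-algebra 2^{{0,…,K}} ⊗ ℬ(𝒪) ⊗ σ((ℛ^{(θ,ϑ)}_s)_{(s,ϑ)∈{1,…,K}×Θ}, (W^{(θ,ϑ)}_s)_{(s,ϑ)∈{0,…,K−1}×Θ}) and the Borel sigma-algebra on ℝ. -/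
/-!
`V^θ_{k,n}` is built, by induction on `n`, only from the inputs `R^{θ'}`, `W^{θ'}` and the values
`V^{θ'}_{·,j}`, `j < n`, at proper descendants `θ' = θ ++ q` of `θ` in the sample tree, so it is
measurable for any σ-algebra on `Ω` making those inputs measurable. The paths `X` are finite
compositions of the measurable maps `φ_l`, and the random level `R^{θ'}_k < k` takes only finitely
many values, so evaluating the level-`l` terms at `l = R^{θ'}_k(ω)` is a finite measurable gluing.
Joint measurability in `k` is free since `{0, …, K}` is finite.
-/

open MeasureTheory ProbabilityTheory Finset

theorem measurable_apply_index_of_lt {β γ : Type*} [MeasurableSpace β] [MeasurableSpace γ]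
    {F : ℕ → β → γ} {N : β → ℕ} {k : ℕ} (hF : ∀ l < k, Measurable (F l)) (hN : Measurable N)
    (hNk : ∀ z, N z < k) : Measurable fun z => F (N z) z := by
  intro s hs
  have hpre : (fun z => F (N z) z) ⁻¹' s = ⋃ l ∈ range k, N ⁻¹' {l} ∩ F l ⁻¹' s := by
    ext z
    simp [hNk z]
  rw [hpre]
  exact measurableSet_biUnion _ fun l hl =>
    (hN (measurableSet_singleton l)).inter (hF l (mem_range.1 hl) hs)

theorem measurable_of_backward_recursion {α S Ω : Type*} [MeasurableSpace α] [MeasurableSpace S]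
    [MeasurableSpace Ω] {φ : ℕ → α → S → α} {W : ℕ → Ω → S} {Y : ℕ → α → Ω → α} {k : ℕ}
    (hφ : ∀ l < k, Measurable fun q : α × S => φ l q.1 q.2) (hW : ∀ l < k, Measurable (W l))
    (hYk : ∀ x ω, Y k x ω = x) (hY : ∀ l < k, ∀ x ω, Y l x ω = φ l (Y (l + 1) x ω) (W l ω))
    {l : ℕ} (hl : l ≤ k) : Measurable fun z : α × Ω => Y l z.1 z.2 := by
  induction hl using Nat.decreasingInduction with
  | self => simpa only [hYk] using measurable_fst
  | of_succ l hl ih =>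
    simp only [hY l hl]
    exact (hφ l hl).comp (ih.prodMk ((hW l hl).comp measurable_snd))

def mlpIncrement {α Ω : Type*} (f : ℕ → α → ℝ → ℝ) (V : List ℤ → ℕ → ℕ → α → Ω → ℝ)
    (θ₁ θ₂ : List ℤ) (j l : ℕ) (y : α) (ω : Ω) : ℝ :=
  (f l y (V θ₁ l j y ω) - V θ₁ l j y ω) - (f l y (V θ₂ l (j - 1) y ω) - V θ₂ l (j - 1) y ω)

/-- The paper's sample index `(θ, j, ±m)` is encoded as the list `θ ++ [j, ±(m + 1)]`. -/
noncomputable def mlpStep {α Ω : Type*} (M : ℕ) (f : ℕ → α → ℝ → ℝ) (g : α → ℝ) (p : ℕ → ℕ → ℝ)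
    (R : List ℤ → ℕ → Ω → ℕ) (X : List ℤ → ℕ → ℕ → α → Ω → α)
    (V : List ℤ → ℕ → ℕ → α → Ω → ℝ) (θ : List ℤ) (k n : ℕ) (x : α) (ω : Ω) : ℝ :=
  ((M : ℝ) ^ n)⁻¹ * (∑ m ∈ range (M ^ n),
    (g (X (θ ++ [0, -((m : ℤ) + 1)]) k 0 x ω)
      + ∑ l ∈ range k, f l (X (θ ++ [0, (m : ℤ) + 1]) k l x ω) 0))
  + ∑ j ∈ Ico 1 n, ((M : ℝ) ^ (n - j))⁻¹ * ∑ m ∈ range (M ^ (n - j)),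
      (if 1 ≤ k then (p k (R (θ ++ [(j : ℤ), (m : ℤ) + 1]) k ω))⁻¹ else 0) *
        mlpIncrement f V (θ ++ [(j : ℤ), (m : ℤ) + 1]) (θ ++ [(j : ℤ), -((m : ℤ) + 1)]) j
          (R (θ ++ [(j : ℤ), (m : ℤ) + 1]) k ω)
          (X (θ ++ [(j : ℤ), (m : ℤ) + 1]) k (R (θ ++ [(j : ℤ), (m : ℤ) + 1]) k ω) x ω) ω

section Measurability

variable {α S Ω : Type*} [MeasurableSpace α] [MeasurableSpace S] [mΩ : MeasurableSpace Ω] {K M : ℕ}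
  {f : ℕ → α → ℝ → ℝ} {g : α → ℝ} {φ : ℕ → α → S → α} {p : ℕ → ℕ → ℝ}
  {W : List ℤ → ℕ → Ω → S} {R : List ℤ → ℕ → Ω → ℕ}
  {X : List ℤ → ℕ → ℕ → α → Ω → α} {V : List ℤ → ℕ → ℕ → α → Ω → ℝ}

theorem measurable_mlpIncrement {θ₁ θ₂ : List ℤ} {j l : ℕ} {Y : α × Ω → α}
    (hf : Measurable fun q : α × ℝ => f l q.1 q.2) (hY : Measurable Y)
    (hV₁ : Measurable fun z : α × Ω => V θ₁ l j z.1 z.2)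
    (hV₂ : Measurable fun z : α × Ω => V θ₂ l (j - 1) z.1 z.2) :
    Measurable fun z : α × Ω => mlpIncrement f V θ₁ θ₂ j l (Y z) z.2 := by
  have h₁ := hV₁.comp (hY.prodMk measurable_snd)
  have h₂ := hV₂.comp (hY.prodMk measurable_snd)
  exact ((hf.comp (hY.prodMk h₁)).sub h₁).sub ((hf.comp (hY.prodMk h₂)).sub h₂)

variable (hf : ∀ l ≤ K, Measurable fun q : α × ℝ => f l q.1 q.2) (hg : Measurable g)
  (hφ : ∀ l ≤ K, Measurable fun q : α × S => φ l q.1 q.2)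
  (hRle : ∀ (θ : List ℤ) (k : ℕ) (ω : Ω), 1 ≤ k → k ≤ K → R θ k ω ≤ k - 1)
  (hXk : ∀ (θ : List ℤ) (k : ℕ) (x : α) (ω : Ω), k ≤ K → X θ k k x ω = x)
  (hXl : ∀ (θ : List ℤ) (k l : ℕ) (x : α) (ω : Ω), l < k → k ≤ K →
    X θ k l x ω = φ l (X θ k (l + 1) x ω) (W θ l ω))
include hf hg hφ hRle hXk hXl

theorem measurable_mlpStep {θ : List ℤ} {k n : ℕ}
    (hW : ∀ q ≠ [], ∀ l < K, Measurable (W (θ ++ q) l))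
    (hR : ∀ q ≠ [], ∀ l, 1 ≤ l → l ≤ K → Measurable (R (θ ++ q) l))
    (hV : ∀ q ≠ [], ∀ j < n, ∀ l ≤ K, Measurable fun z : α × Ω => V (θ ++ q) l j z.1 z.2)
    (hk : k ≤ K) : Measurable fun z : α × Ω => mlpStep M f g p R X V θ k n z.1 z.2 := by
  have hX : ∀ q ≠ [], ∀ l ≤ k, Measurable fun z : α × Ω => X (θ ++ q) k l z.1 z.2 :=
    fun q hq l hl => measurable_of_backward_recursion (fun i _ => hφ i (by omega))
      (fun i hi => hW q hq i (by omega)) (fun x ω => hXk _ k x ω hk)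
      (fun i hi x ω => hXl _ k i x ω hi hk) hl
  refine ((measurable_sum _ fun m _ => ?_).const_mul _).add
    (measurable_sum _ fun j hj => (measurable_sum _ fun m _ => ?_).const_mul _)
  · refine (hg.comp (hX _ (by simp) 0 k.zero_le)).add (measurable_sum _ fun l hl => ?_)
    have hlk := mem_range.1 hl
    exact (hf l (by omega)).comp ((hX _ (by simp) l hlk.le).prodMk measurable_const)
  · obtain ⟨-, hjn⟩ := mem_Ico.1 hj
    by_cases hk1 : 1 ≤ k
    swap
    · simpa only [if_neg hk1, zero_mul] using measurable_const
    simp only [if_pos hk1]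
    refine measurable_apply_index_of_lt (k := k)
      (N := fun z : α × Ω => R (θ ++ [(j : ℤ), (m : ℤ) + 1]) k z.2)
      (F := fun l (z : α × Ω) => (p k l)⁻¹ * mlpIncrement f V (θ ++ [(j : ℤ), (m : ℤ) + 1])
        (θ ++ [(j : ℤ), -((m : ℤ) + 1)]) j l (X (θ ++ [(j : ℤ), (m : ℤ) + 1]) k l z.1 z.2) z.2)
      (fun l hl => ?_) ((hR _ (by simp) k hk1 hk).comp measurable_snd)
      (fun z => by have := hRle (θ ++ [(j : ℤ), (m : ℤ) + 1]) k z.2 hk1 hk; omega)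
    refine (measurable_mlpIncrement (hf l (by omega)) (hX _ (by simp) l hl.le) ?_ ?_).const_mul _
    · exact hV _ (by simp) j hjn l (by omega)
    · exact hV _ (by simp) (j - 1) (by omega) l (by omega)

theorem measurable_mlp (hV0 : ∀ (θ : List ℤ) (k : ℕ) (x : α) (ω : Ω), V θ k 0 x ω = 0)
    (hVrec : ∀ (θ : List ℤ) (k n : ℕ) (x : α) (ω : Ω), k ≤ K → 1 ≤ n →
      V θ k n x ω = mlpStep M f g p R X V θ k n x ω)
    (n : ℕ) {θ : List ℤ} (hW : ∀ q ≠ [], ∀ l < K, Measurable (W (θ ++ q) l))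
    (hR : ∀ q ≠ [], ∀ l, 1 ≤ l → l ≤ K → Measurable (R (θ ++ q) l)) {k : ℕ} (hk : k ≤ K) :
    Measurable fun z : α × Ω => V θ k n z.1 z.2 := by
  induction n using Nat.strong_induction_on generalizing θ k with
  | _ n ih =>
  rcases Nat.eq_zero_or_pos n with rfl | hn
  · simpa only [hV0] using measurable_const
  simp only [hVrec _ _ _ _ _ hk hn]
  refine measurable_mlpStep hf hg hφ hRle hXk hXl hW hR
    (fun q hq j hj l hl => ih j hj (fun q' hq' => ?_) (fun q' hq' => ?_) hl) hk
  · simpa only [List.append_assoc] using hW (q ++ q') (by simp [hq])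
  · simpa only [List.append_assoc] using hR (q ++ q') (by simp [hq])

end Measurability

theorem mlp_measurability_general
    (d K M : ℕ)
    (O : Set (Fin d → ℝ))
    (f : ℕ → O → ℝ → ℝ) (hf : ∀ k, k ≤ K → Measurable (fun q : O × ℝ => f k q.1 q.2))
    (g : O → ℝ) (hg : Measurable g)
    {S : Type*} [MeasurableSpace S]
    (φ : ℕ → O → S → O) (hφ : ∀ k, k ≤ K → Measurable (fun q : O × S => φ k q.1 q.2))
    {Ω : Type*}
    (W : List ℤ → ℕ → Ω → S)
    (R : List ℤ → ℕ → Ω → ℕ)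
    (hRle : ∀ (θ : List ℤ) (k : ℕ) (ω : Ω), 1 ≤ k → k ≤ K → R θ k ω ≤ k - 1)
    (p : ℕ → ℕ → ℝ)
    (X : List ℤ → ℕ → ℕ → O → Ω → O)
    (hXk : ∀ (θ : List ℤ) (k : ℕ) (x : O) (ω : Ω), k ≤ K → X θ k k x ω = x)
    (hXl : ∀ (θ : List ℤ) (k l : ℕ) (x : O) (ω : Ω), l < k → k ≤ K →
      X θ k l x ω = φ l (X θ k (l + 1) x ω) (W θ l ω))
    (V : List ℤ → ℕ → ℕ → O → Ω → ℝ)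
    (hV0 : ∀ (θ : List ℤ) (k : ℕ) (x : O) (ω : Ω), V θ k 0 x ω = 0)
    (hVrec : ∀ (θ : List ℤ) (k n : ℕ) (x : O) (ω : Ω), k ≤ K → 1 ≤ n → V θ k n x ω =
      ((M : ℝ) ^ n)⁻¹ * (∑ m ∈ Finset.range (M ^ n),
        (g (X (θ ++ [0, -((m : ℤ) + 1)]) k 0 x ω)
          + ∑ l ∈ Finset.range k, f l (X (θ ++ [0, (m : ℤ) + 1]) k l x ω) 0))
      + ∑ j ∈ Finset.Ico 1 n, ((M : ℝ) ^ (n - j))⁻¹ *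
          ∑ m ∈ Finset.range (M ^ (n - j)),
            (if 1 ≤ k then (p k (R (θ ++ [(j : ℤ), (m : ℤ) + 1]) k ω))⁻¹ else 0) *
            ((f (R (θ ++ [(j : ℤ), (m : ℤ) + 1]) k ω) (X (θ ++ [(j : ℤ), (m : ℤ) + 1]) k (R (θ ++ [(j : ℤ), (m : ℤ) + 1]) k ω) x ω)
                (V (θ ++ [(j : ℤ), (m : ℤ) + 1]) (R (θ ++ [(j : ℤ), (m : ℤ) + 1]) k ω) j (X (θ ++ [(j : ℤ), (m : ℤ) + 1]) k (R (θ ++ [(j : ℤ), (m : ℤ) + 1]) k ω) x ω) ω)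
              - V (θ ++ [(j : ℤ), (m : ℤ) + 1]) (R (θ ++ [(j : ℤ), (m : ℤ) + 1]) k ω) j (X (θ ++ [(j : ℤ), (m : ℤ) + 1]) k (R (θ ++ [(j : ℤ), (m : ℤ) + 1]) k ω) x ω) ω)
            - (f (R (θ ++ [(j : ℤ), (m : ℤ) + 1]) k ω) (X (θ ++ [(j : ℤ), (m : ℤ) + 1]) k (R (θ ++ [(j : ℤ), (m : ℤ) + 1]) k ω) x ω)
                (V (θ ++ [(j : ℤ), -((m : ℤ) + 1)]) (R (θ ++ [(j : ℤ), (m : ℤ) + 1]) k ω) (j - 1) (X (θ ++ [(j : ℤ), (m : ℤ) + 1]) k (R (θ ++ [(j : ℤ), (m : ℤ) + 1]) k ω) x ω) ω)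
              - V (θ ++ [(j : ℤ), -((m : ℤ) + 1)]) (R (θ ++ [(j : ℤ), (m : ℤ) + 1]) k ω) (j - 1) (X (θ ++ [(j : ℤ), (m : ℤ) + 1]) k (R (θ ++ [(j : ℤ), (m : ℤ) + 1]) k ω) x ω) ω)))
    :
    ∀ (θ : List ℤ) (n : ℕ),
      @Measurable (Fin (K + 1) × O × Ω) ℝ
        ((⊤ : MeasurableSpace (Fin (K + 1))).prod
          ((inferInstance : MeasurableSpace O).prod
            ((⨆ q : {l : List ℤ // l ≠ []} × {s : ℕ // 1 ≤ s ∧ s ≤ K},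
                MeasurableSpace.comap (R (θ ++ q.1.1) q.2.1) inferInstance) ⊔
             (⨆ q : {l : List ℤ // l ≠ []} × {s : ℕ // s < K},
                MeasurableSpace.comap (W (θ ++ q.1.1) q.2.1) inferInstance))))
        inferInstance
        (fun q => V θ (q.1 : ℕ) n q.2.1 q.2.2) := by
  intro θ n
  refine measurable_from_prod_countable_right fun k => measurable_mlp (mΩ := _) hf hg hφ hRle
    hXk hXl hV0 hVrec n (fun q hq l hl => ?_) (fun q hq l hl₁ hl => ?_) (Fin.is_le k)
  · exact .of_comap_le (le_sup_of_le_right (le_iSup_of_le ⟨⟨q, hq⟩, l, hl⟩ le_rfl))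
  · exact .of_comap_le (le_sup_of_le_left (le_iSup_of_le ⟨⟨q, hq⟩, l, hl₁, hl⟩ le_rfl))

theorem mlp_measurability
    (d K M : ℕ) (hd : 0 < d) (hK : 0 < K) (hM : 0 < M)
    (O : Set (Fin d → ℝ)) (hOmeas : MeasurableSet O) (hOne : O.Nonempty)
    (f : ℕ → O → ℝ → ℝ) (hf : ∀ k, k ≤ K → Measurable (fun q : O × ℝ => f k q.1 q.2))
    (g : O → ℝ) (hg : Measurable g)
    {S : Type*} [MeasurableSpace S]
    (φ : ℕ → O → S → O) (hφ : ∀ k, k ≤ K → Measurable (fun q : O × S => φ k q.1 q.2))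
    {Ω : Type*} [MeasurableSpace Ω] (P : Measure Ω) [IsProbabilityMeasure P]
    (W : List ℤ → ℕ → Ω → S) (hWmeas : ∀ θ k, Measurable (W θ k))
    (hWindep : iIndepFun
      (fun q : List ℤ × Fin (K + 1) => W q.1 q.2) P)
    (hWid : ∀ k, k ≤ K → ∀ θ ϑ : List ℤ, IdentDistrib (W θ k) (W ϑ k) P P)
    (R : List ℤ → ℕ → Ω → ℕ) (hRmeas : ∀ θ k, Measurable (R θ k))
    (hRindep : iIndepFun
      (fun (θ : List ℤ) (ω : Ω) (k : Fin (K + 1)) => R θ k ω) P)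
    (hRid : ∀ θ ϑ : List ℤ,
      IdentDistrib (fun (ω : Ω) (k : Fin (K + 1)) => R θ k ω)
        (fun (ω : Ω) (k : Fin (K + 1)) => R ϑ k ω) P P)
    (hRle : ∀ (θ : List ℤ) (k : ℕ) (ω : Ω), 1 ≤ k → k ≤ K → R θ k ω ≤ k - 1)
    (p : ℕ → ℕ → ℝ) (hp : ∀ k l, 1 ≤ k → k ≤ K → 0 < p k l)
    (hpR : ∀ k l, 1 ≤ k → k ≤ K →
      ENNReal.ofReal (p k l) * P {ω | R [0] k ω = l} = (P {ω | R [0] k ω = l}) ^ 2)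
    (hRW : Indep
      (⨆ θ : List ℤ,
        MeasurableSpace.comap (fun (ω : Ω) (k : Fin (K + 1)) => R θ k ω) inferInstance)
      (⨆ q : List ℤ × Fin (K + 1), MeasurableSpace.comap (W q.1 q.2) inferInstance) P)
    (X : List ℤ → ℕ → ℕ → O → Ω → O)
    (hXk : ∀ (θ : List ℤ) (k : ℕ) (x : O) (ω : Ω), k ≤ K → X θ k k x ω = x)
    (hXl : ∀ (θ : List ℤ) (k l : ℕ) (x : O) (ω : Ω), l < k → k ≤ K →
      X θ k l x ω = φ l (X θ k (l + 1) x ω) (W θ l ω))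
    (V : List ℤ → ℕ → ℕ → O → Ω → ℝ)
    (hV0 : ∀ (θ : List ℤ) (k : ℕ) (x : O) (ω : Ω), V θ k 0 x ω = 0)
    (hVrec : ∀ (θ : List ℤ) (k n : ℕ) (x : O) (ω : Ω), k ≤ K → 1 ≤ n → V θ k n x ω =
      ((M : ℝ) ^ n)⁻¹ * (∑ m ∈ Finset.range (M ^ n),
        (g (X (θ ++ [0, -((m : ℤ) + 1)]) k 0 x ω)
          + ∑ l ∈ Finset.range k, f l (X (θ ++ [0, (m : ℤ) + 1]) k l x ω) 0))
      + ∑ j ∈ Finset.Ico 1 n, ((M : ℝ) ^ (n - j))⁻¹ *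
          ∑ m ∈ Finset.range (M ^ (n - j)),
            (if 1 ≤ k then (p k (R (θ ++ [(j : ℤ), (m : ℤ) + 1]) k ω))⁻¹ else 0) *
            ((f (R (θ ++ [(j : ℤ), (m : ℤ) + 1]) k ω) (X (θ ++ [(j : ℤ), (m : ℤ) + 1]) k (R (θ ++ [(j : ℤ), (m : ℤ) + 1]) k ω) x ω)
                (V (θ ++ [(j : ℤ), (m : ℤ) + 1]) (R (θ ++ [(j : ℤ), (m : ℤ) + 1]) k ω) j (X (θ ++ [(j : ℤ), (m : ℤ) + 1]) k (R (θ ++ [(j : ℤ), (m : ℤ) + 1]) k ω) x ω) ω)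
              - V (θ ++ [(j : ℤ), (m : ℤ) + 1]) (R (θ ++ [(j : ℤ), (m : ℤ) + 1]) k ω) j (X (θ ++ [(j : ℤ), (m : ℤ) + 1]) k (R (θ ++ [(j : ℤ), (m : ℤ) + 1]) k ω) x ω) ω)
            - (f (R (θ ++ [(j : ℤ), (m : ℤ) + 1]) k ω) (X (θ ++ [(j : ℤ), (m : ℤ) + 1]) k (R (θ ++ [(j : ℤ), (m : ℤ) + 1]) k ω) x ω)
                (V (θ ++ [(j : ℤ), -((m : ℤ) + 1)]) (R (θ ++ [(j : ℤ), (m : ℤ) + 1]) k ω) (j - 1) (X (θ ++ [(j : ℤ), (m : ℤ) + 1]) k (R (θ ++ [(j : ℤ), (m : ℤ) + 1]) k ω) x ω) ω)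
              - V (θ ++ [(j : ℤ), -((m : ℤ) + 1)]) (R (θ ++ [(j : ℤ), (m : ℤ) + 1]) k ω) (j - 1) (X (θ ++ [(j : ℤ), (m : ℤ) + 1]) k (R (θ ++ [(j : ℤ), (m : ℤ) + 1]) k ω) x ω) ω)))
    :
    ∀ (θ : List ℤ) (n : ℕ),
      @Measurable (Fin (K + 1) × O × Ω) ℝ
        ((⊤ : MeasurableSpace (Fin (K + 1))).prod
          ((inferInstance : MeasurableSpace O).prod
            ((⨆ q : {l : List ℤ // l ≠ []} × {s : ℕ // 1 ≤ s ∧ s ≤ K},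
                MeasurableSpace.comap (R (θ ++ q.1.1) q.2.1) inferInstance) ⊔
             (⨆ q : {l : List ℤ // l ≠ []} × {s : ℕ // s < K},
                MeasurableSpace.comap (W (θ ++ q.1.1) q.2.1) inferInstance))))
        inferInstance
        (fun q => V θ (q.1 : ℕ) n q.2.1 q.2.2) :=
  mlp_measurability_general d K M O f hf g hg φ hφ W R hRle p X hXk hXl V hV0 hVrec
end

section
/- Let (Ω,ℱ,ℙ) be a probability space, let 𝒢_i ⊆ ℱ and 𝒜_i ⊆ ℱ, i ∈ {1,2}, be sigma-algebras on Ω, let (E,ℰ), (S,𝒮), (T,𝒯) be measurable spaces, let U_i : S × Ω → T, i ∈ {1,2}, be identically distributed random fields, let Y_i : E × Ω → S, i ∈ {1,2}, be identically distributed random fields, assume for each i ∈ {1,2} that U_i is (𝒮⊗𝒢_i)/𝒯-measurable, that Y_i is (ℰ⊗𝒜_i)/𝒮-measurable, and that 𝒢_i and 𝒜_i are independent. Then (i) for each i ∈ {1,2} the map U_i(Y_i) : E × Ω → T, (e,ω) ↦ U_i(Y_i(e,ω),ω), is (ℰ⊗ℱ)/𝒯-measurable, and (ii) U_1(Y_1)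 and U_2(Y_2) are identically distributed random fields. -/
open MeasureTheory ProbabilityTheory

/-!
Since `G ⟂ A` and `Y` is `A`-measurable, the vector `X = (Y(e₁), …, Y(eₙ))` is independent of
the identity map `(Ω, F) → (Ω, G)`, so the law of `ω ↦ (X ω, ω)` on `S^n × (Ω, G)` is the product
of the law of `X` and the restriction of `P` to `G`. As `U` is `𝒮 ⊗ G`-measurable, Fubini gives
`P(∀ k, U(Y(e_k)) ∈ B_k) = ∫ P(∀ k, U(x_k) ∈ B_k) d(law X)(x)`,
and the right-hand side only involves finite-dimensional distributions of `U` and of `Y`.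
-/

/-- Two random fields indexed by `A` with values in `T` are identically distributed
if all their finite-dimensional distributions coincide. -/
def IdentDistribRF {A Ω T : Type*} [MeasurableSpace Ω] [MeasurableSpace T]
    (P : MeasureTheory.Measure Ω) (U V : A → Ω → T) : Prop :=
  ∀ (n : ℕ) (a : Fin n → A) (B : Fin n → Set T), (∀ i, MeasurableSet (B i)) →
    P {ω | ∀ i, U (a i) ω ∈ B i} = P {ω | ∀ i, V (a i) ω ∈ B i}

lemma MeasurableSpace.prod_mono {α β : Type*} {m₁ m₂ : MeasurableSpace α}
    {n₁ n₂ : MeasurableSpace β} (hm : m₁ ≤ m₂) (hn : n₁ ≤ n₂) : m₁.prod n₁ ≤ m₂.prod n₂ :=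
  sup_le_sup (MeasurableSpace.comap_mono hm) (MeasurableSpace.comap_mono hn)

lemma ProbabilityTheory.IndepFun.measure_preimage_prodMk {Ω S Z : Type*} [MeasurableSpace Ω]
    [MeasurableSpace S] [MeasurableSpace Z] {P : Measure Ω} [IsFiniteMeasure P] {X : Ω → S}
    {W : Ω → Z} (hXW : X ⟂ᵢ[P] W) (hX : Measurable X) (hW : Measurable W) {C : Set (S × Z)}
    (hC : MeasurableSet C) :
    P ((fun ω ↦ (X ω, W ω)) ⁻¹' C) = ∫⁻ x, P (W ⁻¹' (Prod.mk x ⁻¹' C)) ∂(P.map X) := by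
  rw [← Measure.map_apply (hX.prodMk hW) hC,
    hXW.map_prod_eq_prod_map_map hX.aemeasurable hW.aemeasurable, Measure.prod_apply hC]
  exact lintegral_congr fun x ↦ Measure.map_apply hW (measurable_prodMk_left hC)

lemma IdentDistribRF.map_eq {ι Ω T : Type*} [MeasurableSpace Ω] [MeasurableSpace T]
    {P : Measure Ω} [IsFiniteMeasure P] {V W : ι → Ω → T} (h : IdentDistribRF P V W)
    (hV : ∀ a, Measurable (V a)) (hW : ∀ a, Measurable (W a)) {n : ℕ} (a : Fin n → ι) :
    P.map (fun ω k ↦ V (a k) ω) = P.map (fun ω k ↦ W (a k) ω) := by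
  have hV' : Measurable fun ω k ↦ V (a k) ω := measurable_pi_lambda _ fun k ↦ hV (a k)
  have hW' : Measurable fun ω k ↦ W (a k) ω := measurable_pi_lambda _ fun k ↦ hW (a k)
  refine ext_of_generate_finite _ generateFrom_pi.symm isPiSystem_pi ?_ ?_
  · rintro _ ⟨B, hB, rfl⟩
    have hB' : ∀ k, MeasurableSet (B k) := fun k ↦ hB k (Set.mem_univ k)
    rw [Measure.map_apply hV' (.univ_pi hB'), Measure.map_apply hW' (.univ_pi hB')]
    simpa [Set.preimage, Set.mem_univ_pi] using h n a B hB'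
  · rw [Measure.map_apply hV' .univ, Measure.map_apply hW' .univ, Set.preimage_univ,
      Set.preimage_univ]

section Composition

variable {Ω E S T : Type*} {G A : MeasurableSpace Ω} [mΩ : MeasurableSpace Ω]
  [mS : MeasurableSpace S] [MeasurableSpace T] {P : Measure Ω}

lemma ProbabilityTheory.Indep.indepFun_id {X : Ω → S} (hGA : Indep G A P)
    (hX : Measurable[A] X) :
    @IndepFun Ω S Ω mΩ _ G X id P :=
  (@IndepFun_iff_Indep Ω S Ω mΩ _ G X id P).2 <| indep_of_indep_of_le hGA.symm
    (MeasurableSpace.comap_le_iff_le_map.2 hX) MeasurableSpace.comap_id.le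

lemma ProbabilityTheory.Indep.measure_setOf_comp_mem_eq_lintegral [IsFiniteMeasure P]
    (hG : G ≤ mΩ) (hA : A ≤ mΩ) (hGA : Indep G A P) {U : S → Ω → T} {Y : E → Ω → S}
    (hU : Measurable[MeasurableSpace.prod mS G] (Function.uncurry U))
    (hY : ∀ e, Measurable[A] (Y e)) {n : ℕ} (e : Fin n → E) {B : Fin n → Set T}
    (hB : ∀ k, MeasurableSet (B k)) :
    P {ω | ∀ k, U (Y (e k) ω) ω ∈ B k}
      = ∫⁻ x, P {ω | ∀ k, U (x k) ω ∈ B k} ∂(P.map fun ω k ↦ Y (e k) ω) := by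
  have hX : Measurable[A] fun ω k ↦ Y (e k) ω := by
    let _ := A
    exact measurable_pi_lambda _ fun k ↦ hY (e k)
  have hC : MeasurableSet[MeasurableSpace.pi.prod G]
      {p : (Fin n → S) × Ω | ∀ k, U (p.1 k) p.2 ∈ B k} := by
    let _ := G
    simp only [Set.ofPred_forall]
    exact .iInter fun k ↦ (hU.comp (f := fun p : (Fin n → S) × Ω ↦ (p.1 k, p.2))
      (((measurable_pi_apply k).comp measurable_fst).prodMk measurable_snd)) (hB k)
  exact @IndepFun.measure_preimage_prodMk Ω _ Ω mΩ _ G P _ _ id (hGA.indepFun_id hX)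
    (hX.mono hA le_rfl) (measurable_id'' hG) _ hC

end Composition

theorem composition_identically_distributed {Ω E S T : Type*} [F : MeasurableSpace Ω]
    (P : Measure Ω) [IsProbabilityMeasure P]
    [mE : MeasurableSpace E] [mS : MeasurableSpace S] [mT : MeasurableSpace T]
    (G A : Fin 2 → MeasurableSpace Ω) (hG : ∀ i, G i ≤ F) (hA : ∀ i, A i ≤ F)
    (U : Fin 2 → S → Ω → T) (Y : Fin 2 → E → Ω → S)
    (hUid : IdentDistribRF P (U 0) (U 1))
    (hYid : IdentDistribRF P (Y 0) (Y 1))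
    (hU : ∀ i, @Measurable (S × Ω) T (mS.prod (G i)) mT (fun q => U i q.1 q.2))
    (hY : ∀ i, @Measurable (E × Ω) S (mE.prod (A i)) mS (fun q => Y i q.1 q.2))
    (hGA : ∀ i, Indep (G i) (A i) P) :
    (∀ i, Measurable (fun q : E × Ω => U i (Y i q.1 q.2) q.2)) ∧
      IdentDistribRF P (fun e ω => U 0 (Y 0 e ω) ω) (fun e ω => U 1 (Y 1 e ω) ω) := by
  have hYe : ∀ i e, Measurable[A i] (Y i e) :=
    fun i e ↦ (hY i).comp (@measurable_prodMk_left _ _ _ (A i) e)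
  constructor
  · intro i
    have hU' := (hU i).mono (MeasurableSpace.prod_mono le_rfl (hG i)) le_rfl
    have hY' := (hY i).mono (MeasurableSpace.prod_mono le_rfl (hA i)) le_rfl
    exact hU'.comp (hY'.prodMk measurable_snd)
  · intro n e B hB
    rw [(hGA 0).measure_setOf_comp_mem_eq_lintegral (hG 0) (hA 0) (hU 0) (hYe 0) e hB,
      (hGA 1).measure_setOf_comp_mem_eq_lintegral (hG 1) (hA 1) (hU 1) (hYe 1) e hB,
      hYid.map_eq (fun e ↦ (hYe 0 e).mono (hA 0) le_rfl)
        (fun e ↦ (hYe 1 e).mono (hA 1) le_rfl) e]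
    exact lintegral_congr fun x ↦ hUid n x B hB
end

section
/- Let K, N ∈ ℕ, let (Ω,ℱ,ℙ) be a probability space, let (S,𝒮) be a measurable space, let 𝒢_i ⊆ ℱ, i ∈ {1,…,N}, be independent sigma-algebras on Ω, let 𝒜_i ⊆ ℱ, i ∈ {1,…,N}, be independent sigma-algebras on Ω, let U_i : S × Ω → ℝ^K be (𝒮⊗𝒢_i)/ℬ(ℝ^K)-measurable random fields and V_i : S × Ω → ℝ^K be (𝒮⊗𝒜_i)/ℬ(ℝ^K)-measurable random fields, and assume for each i ∈ {1,…,N} that U_i and V_i are identically distributed. Then the random fields (s,ω) ↦ Σ_{i=1}^N U_i(s,ω) and (s,ω) ↦ Σ_{i=1}^N V_i(s,ω) are identically distributed. -/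
open MeasureTheory ProbabilityTheory

/-!
Fix points `a₁, …, aₙ`. The vectors `Xᵢ = (Uᵢ(a₁), …, Uᵢ(aₙ))` are `𝒢ᵢ`-measurable, hence
independent, so their joint law is the product of their laws; the same holds for the `Vᵢ`.
The marginals agree because `Uᵢ` and `Vᵢ` have the same finite-dimensional distributions, so the
joint laws agree, and so do their pushforwards under `x ↦ ∑ᵢ xᵢ`, which are the
finite-dimensional distributions of the two sums at `a₁, …, aₙ`.
-/

open Set

section FiniteDimensionalLaws

variable {A Ω T : Type*} [MeasurableSpace Ω] [MeasurableSpace T] {P : Measure Ω}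

lemma measure_setOf_forall_mem_eq_map {n : ℕ} {X : Fin n → Ω → T}
    (hX : ∀ j, Measurable (X j)) {B : Fin n → Set T} (hB : ∀ j, MeasurableSet (B j)) :
    P {ω | ∀ j, X j ω ∈ B j} = P.map (fun ω j => X j ω) (univ.pi B) := by
  rw [Measure.map_apply (measurable_pi_lambda _ hX) (.univ_pi hB)]
  congr 1
  ext ω
  simp

lemma identDistribRF_iff_map_eq [IsFiniteMeasure P] {U V : A → Ω → T}
    (hU : ∀ a, Measurable (U a)) (hV : ∀ a, Measurable (V a)) :
    IdentDistribRF P U V ↔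
      ∀ (n : ℕ) (a : Fin n → A), P.map (fun ω j => U (a j) ω) = P.map (fun ω j => V (a j) ω) := by
  refine ⟨fun h n a => ?_, fun h n a B hB => ?_⟩
  · have hUm : Measurable fun ω j => U (a j) ω := measurable_pi_lambda _ fun j => hU (a j)
    have hVm : Measurable fun ω j => V (a j) ω := measurable_pi_lambda _ fun j => hV (a j)
    refine ext_of_generate_finite _ generateFrom_pi.symm isPiSystem_pi ?_ ?_
    · rintro _ ⟨B, hB, rfl⟩
      have hB' : ∀ j, MeasurableSet (B j) := fun j => hB j (mem_univ j)
      rw [← measure_setOf_forall_mem_eq_map (fun j => hU (a j)) hB',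
        ← measure_setOf_forall_mem_eq_map (fun j => hV (a j)) hB']
      exact h n a B hB'
    · rw [Measure.map_apply hUm .univ, Measure.map_apply hVm .univ]
      rfl
  · rw [measure_setOf_forall_mem_eq_map (fun j => hU (a j)) hB,
      measure_setOf_forall_mem_eq_map (fun j => hV (a j)) hB, h n a]

end FiniteDimensionalLaws

namespace ProbabilityTheory

variable {ι Ω : Type*} [MeasurableSpace Ω] {P : Measure Ω}

lemma iIndep.iIndepFun_of_measurable {β : ι → Type*} {mβ : ∀ i, MeasurableSpace (β i)}
    {G : ι → MeasurableSpace Ω} (hG : iIndep G P) {X : ∀ i, Ω → β i}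
    (hX : ∀ i, Measurable[G i] (X i)) : iIndepFun X P :=
  (iIndepFun_iff_iIndep mβ X P).2 (iIndep_of_iIndep_of_le hG fun i => (hX i).comap_le)

variable [Fintype ι] [IsProbabilityMeasure P]

lemma iIndepFun.map_fun_eq_of_map_eq {β : ι → Type*} {mβ : ∀ i, MeasurableSpace (β i)}
    {X Y : ∀ i, Ω → β i} (hXi : iIndepFun X P) (hYi : iIndepFun Y P)
    (hX : ∀ i, Measurable (X i)) (hY : ∀ i, Measurable (Y i))
    (hXY : ∀ i, P.map (X i) = P.map (Y i)) :
    P.map (fun ω i => X i ω) = P.map (fun ω i => Y i ω) := by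
  rw [(iIndepFun_iff_map_fun_eq_pi_map fun i => (hX i).aemeasurable).1 hXi,
    (iIndepFun_iff_map_fun_eq_pi_map fun i => (hY i).aemeasurable).1 hYi, funext hXY]

lemma iIndepFun.map_sum_eq_of_map_eq {E : Type*} [AddCommMonoid E] [MeasurableSpace E]
    [MeasurableAdd₂ E] {X Y : ι → Ω → E} (hXi : iIndepFun X P) (hYi : iIndepFun Y P)
    (hX : ∀ i, Measurable (X i)) (hY : ∀ i, Measurable (Y i))
    (hXY : ∀ i, P.map (X i) = P.map (Y i)) :
    P.map (∑ i, X i) = P.map (∑ i, Y i) := by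
  have hsum : Measurable fun x : ι → E => ∑ i, x i :=
    Finset.measurable_sum _ fun i _ => measurable_pi_apply i
  have hX_sum : ∑ i, X i = (fun x : ι → E => ∑ i, x i) ∘ fun ω i => X i ω := by
    ext ω; simp
  have hY_sum : ∑ i, Y i = (fun x : ι → E => ∑ i, x i) ∘ fun ω i => Y i ω := by
    ext ω; simp
  rw [hX_sum, hY_sum, ← Measure.map_map hsum (measurable_pi_lambda _ hX),
    ← Measure.map_map hsum (measurable_pi_lambda _ hY),
    hXi.map_fun_eq_of_map_eq hYi hX hY hXY]

end ProbabilityTheory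

theorem sums_identically_distributed_general (K N : ℕ)
    {Ω S : Type*} [F : MeasurableSpace Ω] (P : Measure Ω) [IsProbabilityMeasure P]
    [mS : MeasurableSpace S]
    (G A : Fin N → MeasurableSpace Ω) (hG : ∀ i, G i ≤ F) (hA : ∀ i, A i ≤ F)
    (hGindep : iIndep G P) (hAindep : iIndep A P)
    (U V : Fin N → S → Ω → (Fin K → ℝ))
    (hU : ∀ i, @Measurable (S × Ω) (Fin K → ℝ) (mS.prod (G i)) inferInstance
      (fun q => U i q.1 q.2))
    (hV : ∀ i, @Measurable (S × Ω) (Fin K → ℝ) (mS.prod (A i)) inferInstance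
      (fun q => V i q.1 q.2))
    (hUV : ∀ i, IdentDistribRF P (U i) (V i)) :
    IdentDistribRF P (fun (s : S) (ω : Ω) => ∑ i, U i s ω)
      (fun (s : S) (ω : Ω) => ∑ i, V i s ω) := by
  have hUG : ∀ i s, Measurable[G i] (U i s) := fun i s => (hU i).of_uncurry_left
  have hVA : ∀ i s, Measurable[A i] (V i s) := fun i s => (hV i).of_uncurry_left
  have hUF : ∀ i s, Measurable (U i s) := fun i s => (hUG i s).mono (hG i) le_rfl
  have hVF : ∀ i s, Measurable (V i s) := fun i s => (hVA i s).mono (hA i) le_rfl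
  rw [identDistribRF_iff_map_eq (fun s => Finset.measurable_sum _ fun i _ => hUF i s)
    (fun s => Finset.measurable_sum _ fun i _ => hVF i s)]
  intro n a
  have hUa : ∀ i, Measurable[G i] fun ω j => U i (a j) ω :=
    fun i => @measurable_pi_lambda _ _ _ (G i) _ _ fun j => hUG i (a j)
  have hVa : ∀ i, Measurable[A i] fun ω j => V i (a j) ω :=
    fun i => @measurable_pi_lambda _ _ _ (A i) _ _ fun j => hVA i (a j)
  have hlaw := (hGindep.iIndepFun_of_measurable hUa).map_sum_eq_of_map_eq
    (hAindep.iIndepFun_of_measurable hVa) (fun i => (hUa i).mono (hG i) le_rfl)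
    (fun i => (hVa i).mono (hA i) le_rfl)
    fun i => (identDistribRF_iff_map_eq (hUF i) (hVF i)).1 (hUV i) n a
  convert hlaw using 2 <;> ext ω j <;> simp

theorem sums_identically_distributed (K N : ℕ) (hK : 0 < K) (hN : 0 < N)
    {Ω S : Type*} [F : MeasurableSpace Ω] (P : Measure Ω) [IsProbabilityMeasure P]
    [mS : MeasurableSpace S]
    (G A : Fin N → MeasurableSpace Ω) (hG : ∀ i, G i ≤ F) (hA : ∀ i, A i ≤ F)
    (hGindep : iIndep G P) (hAindep : iIndep A P)
    (U V : Fin N → S → Ω → (Fin K → ℝ))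
    (hU : ∀ i, @Measurable (S × Ω) (Fin K → ℝ) (mS.prod (G i)) inferInstance
      (fun q => U i q.1 q.2))
    (hV : ∀ i, @Measurable (S × Ω) (Fin K → ℝ) (mS.prod (A i)) inferInstance
      (fun q => V i q.1 q.2))
    (hUV : ∀ i, IdentDistribRF P (U i) (V i)) :
    IdentDistribRF P (fun (s : S) (ω : Ω) => ∑ i, U i s ω)
      (fun (s : S) (ω : Ω) => ∑ i, V i s ω) :=
  sums_identically_distributed_general K N (F := F) P (mS := mS) G A hG hA hGindep hAindep U V hU hV
    hUV
end

section
/- Under the Setting, (i) for every θ ∈ Θ the random fields {(m,n) ∈ ℕ₀² : n ≤ m ≤ K} × 𝒪 × Ω ∋ (k,l,x,ω) ↦ X^{θ,k,x}_l(ω) ∈ 𝒪 and (k,l,x,ω) ↦ X^{0,k,x}_l(ω) ∈ 𝒪 are identically distributed, and (ii) for all θ, ϑ ∈ Θ and all k,l,m ∈ ℕ₀ with m ≤ l ≤ k ≤ K the random fields 𝒪 × Ω ∋ (x,ω) ↦ X^{ϑ,l,X^{θ,k,x}_l(ω)}_m(ω) ∈ 𝒪 and (x,ω) ↦ X^{0,k,x}_m(ω)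 ∈ 𝒪 are identically distributed. -/
/-!
Started at `x` at time `k`, the recursion makes `X^{θ,k,x}_l` a fixed measurable function of
the noise vector `(W^θ_j)_{l ≤ j < k}`. By independence, the joint law of any selection
`(W^{σ_j}_j)_{j ≤ K}` of the noises, one per time, is the product of the marginals, which do
not depend on the chosen indices `σ_j`; so it equals the law of `(W^0_j)_{j ≤ K}`. Part (i)
takes `σ ≡ θ`. For part (ii), running the flow of `ϑ` from `l` down to `m` after the flow of
`θ` from `k` down to `l` is the flow from `k` down to `m` driven by `W^ϑ` before time `l` and
by `W^θ` from time `l` on.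
-/

open MeasureTheory ProbabilityTheory

section

variable {α S : Type*}

/-- `backwardFlow φ w l n x` is the state at time `l` of the recursion
`Y_{j} = φ j (Y_{j+1}) (w j)` started at `x` at time `l + n`. -/
def backwardFlow (φ : ℕ → α → S → α) (w : ℕ → S) : ℕ → ℕ → α → α
  | _, 0, x => x
  | l, n + 1, x => φ l (backwardFlow φ w (l + 1) n x) (w l)

variable (φ : ℕ → α → S → α)

theorem backwardFlow_add (w : ℕ → S) (a b l : ℕ) (x : α) :
    backwardFlow φ w l a (backwardFlow φ w (l + a) b x) = backwardFlow φ w l (a + b) x := by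
  induction a generalizing l with
  | zero => rw [Nat.add_zero, Nat.zero_add]; rfl
  | succ a ih =>
    rw [Nat.add_right_comm a 1 b]
    simp only [backwardFlow]
    rw [← ih (l + 1), Nat.add_right_comm l 1 a, Nat.add_assoc]

theorem backwardFlow_comp_backwardFlow (w : ℕ → S) {m l k : ℕ} (x : α) (hml : m ≤ l)
    (hlk : l ≤ k) :
    backwardFlow φ w m (l - m) (backwardFlow φ w l (k - l) x) =
      backwardFlow φ w m (k - m) x := by
  obtain ⟨a, rfl⟩ := Nat.exists_eq_add_of_le hml
  obtain ⟨b, rfl⟩ := Nat.exists_eq_add_of_le hlk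
  rw [Nat.add_sub_cancel_left, Nat.add_sub_cancel_left, Nat.add_assoc, Nat.add_sub_cancel_left]
  exact backwardFlow_add φ w a b m x

theorem backwardFlow_congr {w w' : ℕ → S} {l n : ℕ} (x : α)
    (h : ∀ j, l ≤ j → j < l + n → w j = w' j) :
    backwardFlow φ w l n x = backwardFlow φ w' l n x := by
  induction n generalizing l with
  | zero => rfl
  | succ n ih =>
    simp only [backwardFlow]
    rw [h l le_rfl (by omega), ih fun j hj₁ hj₂ => h j (by omega) (by omega)]

theorem eq_backwardFlow_of_recursion {w : ℕ → S} {k : ℕ} {x : α} {Y : ℕ → α}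
    (hk : Y k = x) (hY : ∀ l < k, Y l = φ l (Y (l + 1)) (w l)) {l : ℕ} (hl : l ≤ k) :
    Y l = backwardFlow φ w l (k - l) x := by
  induction h : k - l generalizing l with
  | zero =>
    obtain rfl : l = k := by omega
    exact hk
  | succ n ih =>
    rw [hY l (by omega), ih (by omega) (by omega)]
    rfl

theorem measurable_backwardFlow [MeasurableSpace α] [MeasurableSpace S] {E : Type*}
    [MeasurableSpace E] {w : E → ℕ → S} {l n : ℕ} (x : α)
    (hφ : ∀ j < l + n, Measurable fun q : α × S => φ j q.1 q.2)
    (hw : ∀ j < l + n, Measurable fun e => w e j) :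
    Measurable fun e => backwardFlow φ (w e) l n x := by
  induction n generalizing l with
  | zero => exact measurable_const
  | succ n ih =>
    have hnext : Measurable fun e => backwardFlow φ (w e) (l + 1) n x :=
      ih (fun j hj => hφ j (by omega)) (fun j hj => hw j (by omega))
    exact (hφ l (by omega)).comp (hnext.prodMk (hw l (by omega)))

theorem ProbabilityTheory.iIndepFun.map_select_eq {Ω ι κ : Type*} [MeasurableSpace Ω]
    [MeasurableSpace S] [Fintype κ] {P : Measure Ω} {f : ι → κ → Ω → S} (hf : ∀ i j, Measurable (f i j))
    (h : iIndepFun (fun q : ι × κ => f q.1 q.2) P)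
    (hid : ∀ j i i', IdentDistrib (f i j) (f i' j) P P) (σ σ' : κ → ι) :
    P.map (fun ω j => f (σ j) j ω) = P.map (fun ω j => f (σ' j) j ω) := by
  have hinj (τ : κ → ι) : Function.Injective fun j => (τ j, j) :=
    fun _ _ h => congrArg Prod.snd h
  rw [(h.precomp (hinj σ)).map_fun_eq_pi_map fun j => (hf _ _).aemeasurable,
    (h.precomp (hinj σ')).map_fun_eq_pi_map fun j => (hf _ _).aemeasurable]
  exact congrArg Measure.pi (funext fun j => (hid j _ _).map_eq)

theorem identDistribRF_comp_of_map_eq {A Ω E T : Type*} [MeasurableSpace Ω] [MeasurableSpace E]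
    [MeasurableSpace T] {P : Measure Ω} {V V' : Ω → E} (hV : Measurable V)
    (hV' : Measurable V') (hmap : P.map V = P.map V') {G : A → E → T}
    (hG : ∀ a, Measurable (G a)) :
    IdentDistribRF P (fun a ω => G a (V ω)) (fun a ω => G a (V' ω)) := by
  intro n a B hB
  have hC : MeasurableSet (⋂ i, G (a i) ⁻¹' B i) := .iInter fun i => hG (a i) (hB i)
  have hpre (U : Ω → E) :
      {ω | ∀ i, G (a i) (U ω) ∈ B i} = U ⁻¹' ⋂ i, G (a i) ⁻¹' B i := by
    ext; simp
  dsimp only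
  rw [hpre, hpre, ← Measure.map_apply hV hC, ← Measure.map_apply hV' hC, hmap]

end

theorem X_identically_distributed_general
    (d K : ℕ)
    (O : Set (Fin d → ℝ))
    {S : Type*} [MeasurableSpace S]
    (φ : ℕ → O → S → O) (hφ : ∀ k, k ≤ K → Measurable (fun q : O × S => φ k q.1 q.2))
    {Ω : Type*} [MeasurableSpace Ω] (P : Measure Ω)
    (W : List ℤ → ℕ → Ω → S) (hWmeas : ∀ θ k, Measurable (W θ k))
    (hWindep : iIndepFun
      (fun q : List ℤ × Fin (K + 1) => W q.1 q.2) P)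
    (hWid : ∀ k, k ≤ K → ∀ θ ϑ : List ℤ, IdentDistrib (W θ k) (W ϑ k) P P)
    (X : List ℤ → ℕ → ℕ → O → Ω → O)
    (hXk : ∀ (θ : List ℤ) (k : ℕ) (x : O) (ω : Ω), k ≤ K → X θ k k x ω = x)
    (hXl : ∀ (θ : List ℤ) (k l : ℕ) (x : O) (ω : Ω), l < k → k ≤ K →
      X θ k l x ω = φ l (X θ k (l + 1) x ω) (W θ l ω)) :
    (∀ θ : List ℤ,
      IdentDistribRF P
        (fun (q : {q : ℕ × ℕ // q.2 ≤ q.1 ∧ q.1 ≤ K} × O) (ω : Ω) =>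
          X θ q.1.1.1 q.1.1.2 q.2 ω)
        (fun (q : {q : ℕ × ℕ // q.2 ≤ q.1 ∧ q.1 ≤ K} × O) (ω : Ω) =>
          X [0] q.1.1.1 q.1.1.2 q.2 ω)) ∧
    (∀ (θ ϑ : List ℤ) (k l m : ℕ), m ≤ l → l ≤ k → k ≤ K →
      IdentDistribRF P
        (fun (x : O) (ω : Ω) => X ϑ l m (X θ k l x ω) ω)
        (fun (x : O) (ω : Ω) => X [0] k m x ω)) := by
  set noise : (Fin (K + 1) → List ℤ) → Ω → Fin (K + 1) → S :=
    fun σ ω j => W (σ j) j ω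
  have noise_measurable σ : Measurable (noise σ) := measurable_pi_lambda _ fun j => hWmeas _ _
  have identDistribRF_noise {A : Type _} σ {G : A → (Fin (K + 1) → S) → O}
      (hG : ∀ a, Measurable (G a)) :
      IdentDistribRF P (fun a ω => G a (noise σ ω))
        (fun a ω => G a (noise (fun _ => [0]) ω)) :=
    identDistribRF_comp_of_map_eq (noise_measurable σ) (noise_measurable _)
      (hWindep.map_select_eq (f := fun i (j : Fin (K + 1)) => W i j) (fun i j => hWmeas i j)
        (fun j => hWid j j.is_le) _ _) hG
  -- `Fin.ofNat` reduces times modulo `K + 1`, but only times below `k ≤ K` are ever read.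
  set flow : ℕ → ℕ → O → (Fin (K + 1) → S) → O :=
    fun l n x v => backwardFlow φ (fun j => v (Fin.ofNat (K + 1) j)) l n x
  have flow_measurable l n x (h : l + n ≤ K) : Measurable (flow l n x) :=
    measurable_backwardFlow φ x (fun j hj => hφ j (by omega)) (fun j _ => measurable_pi_apply _)
  have X_eq σ θ k l x ω (hlk : l ≤ k) (hk : k ≤ K)
      (hσ : ∀ j : Fin (K + 1), l ≤ j → j < k → σ j = θ) :
      X θ k l x ω = flow l (k - l) x (noise σ ω) := by
    rw [eq_backwardFlow_of_recursion φ (hXk θ k x ω hk) (fun l hl => hXl θ k l x ω hl hk) hlk]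
    refine backwardFlow_congr φ x fun j hj₁ hj₂ => ?_
    have hj : (Fin.ofNat (K + 1) j : ℕ) = j := by
      rw [Fin.val_ofNat, Nat.mod_eq_of_lt (by omega)]
    simp only [noise, hj, hσ (Fin.ofNat (K + 1) j) (by omega) (by omega)]
  refine ⟨fun θ => ?_, fun θ ϑ k l m hml hlk hkK => ?_⟩
  · convert identDistribRF_noise (fun _ => θ)
      (G := fun (q : {q : ℕ × ℕ // q.2 ≤ q.1 ∧ q.1 ≤ K} × O) =>
        flow q.1.1.2 (q.1.1.1 - q.1.1.2) q.2)
      (fun q => flow_measurable _ _ _ (by have := q.1.2; omega)) using 3 with q ω q ω <;>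
    exact X_eq _ _ _ _ _ _ q.1.2.1 q.1.2.2 fun _ _ _ => rfl
  · set σ : Fin (K + 1) → List ℤ := fun j => if (j : ℕ) < l then ϑ else θ
    convert identDistribRF_noise σ (G := flow m (k - m))
      (fun x => flow_measurable _ _ _ (by omega)) using 3 with x ω x ω
    · rw [X_eq σ θ k l x ω hlk hkK fun j hj _ => if_neg (not_lt.2 hj),
        X_eq σ ϑ l m _ ω hml (hlk.trans hkK) fun j _ hj => if_pos hj]
      exact backwardFlow_comp_backwardFlow φ _ x hml hlk
    · exact X_eq _ _ _ _ _ _ (hml.trans hlk) hkK fun _ _ _ => rfl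

theorem X_identically_distributed
    (d K : ℕ) (hd : 0 < d) (hK : 0 < K)
    (O : Set (Fin d → ℝ)) (hOmeas : MeasurableSet O) (hOne : O.Nonempty)
    {S : Type*} [MeasurableSpace S]
    (φ : ℕ → O → S → O) (hφ : ∀ k, k ≤ K → Measurable (fun q : O × S => φ k q.1 q.2))
    {Ω : Type*} [MeasurableSpace Ω] (P : Measure Ω) [IsProbabilityMeasure P]
    (W : List ℤ → ℕ → Ω → S) (hWmeas : ∀ θ k, Measurable (W θ k))
    (hWindep : iIndepFun
      (fun q : List ℤ × Fin (K + 1) => W q.1 q.2) P)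
    (hWid : ∀ k, k ≤ K → ∀ θ ϑ : List ℤ, IdentDistrib (W θ k) (W ϑ k) P P)
    (X : List ℤ → ℕ → ℕ → O → Ω → O)
    (hXk : ∀ (θ : List ℤ) (k : ℕ) (x : O) (ω : Ω), k ≤ K → X θ k k x ω = x)
    (hXl : ∀ (θ : List ℤ) (k l : ℕ) (x : O) (ω : Ω), l < k → k ≤ K →
      X θ k l x ω = φ l (X θ k (l + 1) x ω) (W θ l ω)) :
    (∀ θ : List ℤ,
      IdentDistribRF P
        (fun (q : {q : ℕ × ℕ // q.2 ≤ q.1 ∧ q.1 ≤ K} × O) (ω : Ω) =>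
          X θ q.1.1.1 q.1.1.2 q.2 ω)
        (fun (q : {q : ℕ × ℕ // q.2 ≤ q.1 ∧ q.1 ≤ K} × O) (ω : Ω) =>
          X [0] q.1.1.1 q.1.1.2 q.2 ω)) ∧
    (∀ (θ ϑ : List ℤ) (k l m : ℕ), m ≤ l → l ≤ k → k ≤ K →
      IdentDistribRF P
        (fun (x : O) (ω : Ω) => X ϑ l m (X θ k l x ω) ω)
        (fun (x : O) (ω : Ω) => X [0] k m x ω)) :=
  X_identically_distributed_general d K O φ hφ P W hWmeas hWindep hWid X hXk hXl
end

section
/- Let d,K ∈ ℕ, L ∈ ℝ, let 𝒪 ∈ ℬ(ℝ^d)\{∅} be a nonempty Borel set, let f_k : 𝒪 × ℝ → ℝ, k ∈ {0,…,K}, be Borel measurable with |f_k(x,a) − f_k(x,b)| ≤ L|a − b| for all k, x ∈ 𝒪, a,b ∈ ℝ, let g : 𝒪 → ℝ be Borel measurable, let (S,𝒮) be a measurable space, let φ_k : 𝒪 × S → 𝒪, k ∈ {0,…,K}, be jointly measurable, let (Ω,ℱ,ℙ) be a probability space, let W_k : Ω → S, k ∈ {0,…,K}, be independent random variables, for each k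 define X^{k,x}_l by X^{k,x}_k = x and X^{k,x}_l = φ_l(X^{k,x}_{l+1}, W_l) for l < k, and assume E[|g(X^{k,x}_0)|² + Σ_{l=0}^{k−1} |f_l(X^{k,x}_l,0)|²] < ∞ for all k ∈ {0,…,K}, x ∈ 𝒪. Then there exist Borel measurable functions v_k : 𝒪 → ℝ, k ∈ {0,…,K}, such that for all k ∈ {1,…,K} and x ∈ 𝒪 it holds that E[|f_{k−1}(X^{k,x}_{k−1}, v_{k−1}(X^{k,x}_{k−1}))| + Σ_{l=1}^k |v_l(X^{k,x}_l)|²] < ∞, v_0(x) = g(x), and v_k(x) = E[f_{k−1}(X^{k,x}_{k−1}, v_{k−1}(X^{k,x}_{k−1}))]. -/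
/-!
Set `v₀ = g` and `v_{k+1}(x) = 𝔼[f_k(φ_k(x, W_k), v_k(φ_k(x, W_k)))]`; measurability and the
identity for `v_k` are then immediate, since `X^{k,x}_{k-1} = φ_{k-1}(x, W_{k-1})`. For
integrability, Jensen's inequality and the Lipschitz bound give `v_k² ≤ (2 + 2L²)^k B_k`, where
`B_k(x) = 𝔼[g(X^{k,x}_0)² + ∑_{l<k} f_l(X^{k,x}_l, 0)²]` (`dataSecondMoment`) obeys the same
backward recursion. As `X^{k,x}_{l+1}` is a function of `W_{l+1}, …, W_{k-1}`, it is independent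
of `W_l`, so Fubini shows that `𝔼[B_l(X^{k,x}_l)]` is the assumed finite moment truncated at `l`.
-/

open MeasureTheory ProbabilityTheory
open scoped ENNReal

lemma sq_lintegral_le_lintegral_sq {Ω : Type*} [MeasurableSpace Ω] {μ : Measure Ω}
    [IsProbabilityMeasure μ] {h : Ω → ℝ≥0∞} (hh : AEMeasurable h μ) :
    (∫⁻ ω, h ω ∂μ) ^ 2 ≤ ∫⁻ ω, h ω ^ 2 ∂μ := by
  have hHolder := ENNReal.lintegral_mul_le_Lp_mul_Lq μ Real.HolderConjugate.two_two hh
    (aemeasurable_const (b := (1 : ℝ≥0∞)))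
  simp only [Pi.mul_apply, mul_one, ENNReal.one_rpow, lintegral_const, measure_univ] at hHolder
  calc (∫⁻ ω, h ω ∂μ) ^ 2 ≤ ((∫⁻ ω, h ω ^ (2 : ℝ) ∂μ) ^ (1 / 2 : ℝ)) ^ 2 := by
        simpa using pow_le_pow_left₀ zero_le hHolder 2
    _ = ∫⁻ ω, h ω ^ 2 ∂μ := by
        rw [← ENNReal.rpow_natCast, ← ENNReal.rpow_mul]
        norm_num

lemma ofReal_sq_integral_le {Ω : Type*} [MeasurableSpace Ω] {μ : Measure Ω}
    [IsProbabilityMeasure μ] {F : Ω → ℝ} (hF : AEMeasurable F μ) :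
    ENNReal.ofReal ((∫ ω, F ω ∂μ) ^ 2) ≤ ∫⁻ ω, ENNReal.ofReal (F ω ^ 2) ∂μ := by
  have hsq : ∀ a : ℝ, ENNReal.ofReal (a ^ 2) = ‖a‖ₑ ^ 2 := fun a => by
    rw [Real.enorm_eq_ofReal_abs, ← ENNReal.ofReal_pow (abs_nonneg a), sq_abs]
  simp only [hsq]
  calc ‖∫ ω, F ω ∂μ‖ₑ ^ 2 ≤ (∫⁻ ω, ‖F ω‖ₑ ∂μ) ^ 2 :=
        pow_le_pow_left₀ zero_le (enorm_integral_le_lintegral_enorm F) 2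
    _ ≤ ∫⁻ ω, ‖F ω‖ₑ ^ 2 ∂μ := sq_lintegral_le_lintegral_sq hF.enorm

lemma sq_le_of_abs_sub_le {p q a L : ℝ} (h : |p - q| ≤ L * |a|) :
    p ^ 2 ≤ (2 + 2 * L ^ 2) * (q ^ 2 + a ^ 2) := by
  have hp : |p| ≤ |q| + L * |a| := by linarith [abs_sub_abs_le_abs_sub p q]
  calc p ^ 2 = |p| ^ 2 := (sq_abs p).symm
    _ ≤ (|q| + L * |a|) ^ 2 := pow_le_pow_left₀ (abs_nonneg p) hp 2
    _ ≤ (2 + 2 * L ^ 2) * (q ^ 2 + a ^ 2) := by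
        nlinarith [sq_nonneg (|q| - L * |a|), sq_abs q, sq_abs a, sq_nonneg (L * q)]

lemma ofReal_sq_le_pow_succ_mul {p q a L : ℝ} {B : ℝ≥0∞} {k : ℕ} (h : |p - q| ≤ L * |a|)
    (ha : ENNReal.ofReal (a ^ 2) ≤ ENNReal.ofReal (2 + 2 * L ^ 2) ^ k * B) :
    ENNReal.ofReal (p ^ 2)
      ≤ ENNReal.ofReal (2 + 2 * L ^ 2) ^ (k + 1) * (ENNReal.ofReal (q ^ 2) + B) := by
  set C := ENNReal.ofReal (2 + 2 * L ^ 2)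
  have hC : 1 ≤ C ^ k := one_le_pow₀ (ENNReal.one_le_ofReal.mpr (by nlinarith [sq_nonneg L]))
  calc ENNReal.ofReal (p ^ 2) ≤ C * (ENNReal.ofReal (q ^ 2) + ENNReal.ofReal (a ^ 2)) := by
        rw [← ENNReal.ofReal_add (sq_nonneg q) (sq_nonneg a),
          ← ENNReal.ofReal_mul (by positivity)]
        exact ENNReal.ofReal_le_ofReal (sq_le_of_abs_sub_le h)
    _ ≤ C * (C ^ k * ENNReal.ofReal (q ^ 2) + C ^ k * B) := by
        gcongr
        exact le_mul_of_one_le_left zero_le hC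
    _ = C ^ (k + 1) * (ENNReal.ofReal (q ^ 2) + B) := by ring

lemma ofReal_abs_le_one_add_ofReal_sq (p : ℝ) :
    ENNReal.ofReal |p| ≤ 1 + ENNReal.ofReal (p ^ 2) := by
  rw [← ENNReal.ofReal_one, ← ENNReal.ofReal_add zero_le_one (sq_nonneg p)]
  exact ENNReal.ofReal_le_ofReal (by nlinarith [sq_abs p, sq_nonneg (|p| - 1)])

theorem ProbabilityTheory.IndepFun.lintegral_comp_eq_lintegral_lintegral {Ω β γ : Type*}
    [MeasurableSpace Ω] [MeasurableSpace β] [MeasurableSpace γ] {μ : Measure Ω} [IsFiniteMeasure μ]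
    {Y : Ω → β} {Z : Ω → γ} (hYZ : IndepFun Y Z μ) (hY : Measurable Y) (hZ : Measurable Z)
    {Φ : β × γ → ℝ≥0∞} (hΦ : Measurable Φ) :
    ∫⁻ ω, Φ (Y ω, Z ω) ∂μ = ∫⁻ ω, ∫⁻ ω', Φ (Y ω, Z ω') ∂μ ∂μ := by
  calc ∫⁻ ω, Φ (Y ω, Z ω) ∂μ = ∫⁻ p, Φ p ∂((μ.map Y).prod (μ.map Z)) := by
        rw [← (indepFun_iff_map_prod_eq_prod_map_map hY.aemeasurable hZ.aemeasurable).mp hYZ,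
          lintegral_map hΦ (hY.prodMk hZ)]
    _ = ∫⁻ y, ∫⁻ ω', Φ (y, Z ω') ∂μ ∂(μ.map Y) := by
        rw [lintegral_prod _ hΦ.aemeasurable]
        exact lintegral_congr fun y => lintegral_map (hΦ.comp measurable_prodMk_left) hZ
    _ = ∫⁻ ω, ∫⁻ ω', Φ (Y ω, Z ω') ∂μ ∂μ := lintegral_map
        (hΦ.comp (measurable_fst.prodMk (hZ.comp measurable_snd))).lintegral_prod_right' hY

section

variable {α S Ω : Type*}

structure IsBackwardChain (φ : ℕ → α → S → α) (W : ℕ → Ω → S) (k : ℕ) (x : α)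
    (Y : ℕ → Ω → α) : Prop where
  start : ∀ ω, Y k ω = x
  step : ∀ l < k, ∀ ω, Y l ω = φ l (Y (l + 1) ω) (W l ω)

namespace IsBackwardChain

variable [MeasurableSpace α] [MeasurableSpace S]
  {φ : ℕ → α → S → α} {W : ℕ → Ω → S} {k : ℕ} {x : α} {Y : ℕ → Ω → α}

lemma measurable_of_le {m : MeasurableSpace Ω} (hY : IsBackwardChain φ W k x Y) {l : ℕ}
    (hl : l ≤ k) (hφ : ∀ j, l ≤ j → j < k → Measurable (Function.uncurry (φ j)))
    (hW : ∀ j, l ≤ j → j < k → Measurable[m] (W j)) :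
    Measurable[m] (Y l) := by
  induction hl using Nat.decreasingInduction with
  | self => rw [funext hY.start]; exact measurable_const
  | of_succ j hj ih =>
    have hnext := ih (fun i hi => hφ i (by omega)) (fun i hi => hW i (by omega))
    rw [funext (hY.step j hj)]
    exact (hφ j le_rfl hj).comp (hnext.prodMk (hW j le_rfl hj))

variable [MeasurableSpace Ω] {P : Measure Ω} {K : ℕ}

lemma indepFun_succ (hY : IsBackwardChain φ W k x Y) (hkK : k ≤ K)
    {l : ℕ} (hl : l < k) (hφ : ∀ j < k, Measurable (Function.uncurry (φ j)))
    (hW : ∀ j, Measurable (W j)) (hind : iIndepFun (fun i : Fin (K + 1) => W i) P) :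
    IndepFun (Y (l + 1)) (W l) P := by
  let σW : Fin (K + 1) → MeasurableSpace Ω := fun i => MeasurableSpace.comap (W i) inferInstance
  have hfuture : Indep (⨆ i ∈ {i : Fin (K + 1) | l < i}, σW i)
      (⨆ i ∈ {i : Fin (K + 1) | (i : ℕ) = l}, σW i) P :=
    indep_iSup_of_disjoint (fun i : Fin (K + 1) => (hW i).comap_le)
      ((iIndepFun_iff_iIndep (fun _ => inferInstance) (fun i : Fin (K + 1) => W i) P).mp hind)
      (Set.disjoint_left.mpr fun i hi hi' => by simp only [Set.mem_ofPred_eq] at hi hi'; omega)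
  rw [IndepFun_iff_Indep]
  refine indep_of_indep_of_le_right (indep_of_indep_of_le_left hfuture ?_) ?_
  · refine Measurable.comap_le (hY.measurable_of_le hl (fun j _ hj => hφ j hj) fun j hj hj' => ?_)
    exact Measurable.of_comap_le
      (le_iSup₂ (f := fun i (_ : i ∈ {i : Fin (K + 1) | l < i}) => σW i) ⟨j, by omega⟩
        (show l < j by omega))
  · exact le_iSup₂ (f := fun i (_ : i ∈ {i : Fin (K + 1) | (i : ℕ) = l}) => σW i) ⟨l, by omega⟩
      rfl

lemma lintegral_lintegral_step [IsFiniteMeasure P] (hY : IsBackwardChain φ W k x Y) (hkK : k ≤ K)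
    {l : ℕ} (hl : l < k) (hφ : ∀ j < k, Measurable (Function.uncurry (φ j)))
    (hW : ∀ j, Measurable (W j)) (hind : iIndepFun (fun i : Fin (K + 1) => W i) P)
    {h : α → ℝ≥0∞} (hh : Measurable h) :
    ∫⁻ ω, ∫⁻ ω', h (φ l (Y (l + 1) ω) (W l ω')) ∂P ∂P = ∫⁻ ω, h (Y l ω) ∂P := by
  calc ∫⁻ ω, ∫⁻ ω', h (φ l (Y (l + 1) ω) (W l ω')) ∂P ∂P
      = ∫⁻ ω, h (φ l (Y (l + 1) ω) (W l ω)) ∂P :=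
        ((hY.indepFun_succ hkK hl hφ hW hind).lintegral_comp_eq_lintegral_lintegral
          (hY.measurable_of_le hl (fun j _ hj => hφ j hj) fun j _ _ => hW j) (hW l)
          (hh.comp (hφ l hl))).symm
    _ = ∫⁻ ω, h (Y l ω) ∂P := lintegral_congr fun ω => by rw [hY.step l hl ω]

end IsBackwardChain

section

variable [MeasurableSpace α] [MeasurableSpace S] [MeasurableSpace Ω]
  (g : α → ℝ) (f : ℕ → α → ℝ → ℝ) (φ : ℕ → α → S → α) (W : ℕ → Ω → S) (P : Measure Ω)

noncomputable def exactSolution : ℕ → α → ℝ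
  | 0 => g
  | k + 1 => fun x => ∫ ω, f k (φ k x (W k ω)) (exactSolution k (φ k x (W k ω))) ∂P

noncomputable def dataSecondMoment : ℕ → α → ℝ≥0∞
  | 0 => fun x => ENNReal.ofReal (g x ^ 2)
  | k + 1 => fun x => ∫⁻ ω, (ENNReal.ofReal (f k (φ k x (W k ω)) 0 ^ 2)
      + dataSecondMoment k (φ k x (W k ω))) ∂P

variable {g f φ W P}

lemma measurable_exactSolution [SFinite P] (hg : Measurable g) {k : ℕ}
    (hf : ∀ j < k, Measurable (Function.uncurry (f j)))
    (hφ : ∀ j < k, Measurable (Function.uncurry (φ j))) (hW : ∀ j, Measurable (W j)) :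
    Measurable (exactSolution g f φ W P k) := by
  induction k with
  | zero => exact hg
  | succ k ih =>
    have hstep : Measurable fun q : α × Ω => φ k q.1 (W k q.2) :=
      (hφ k k.lt_succ_self).comp (measurable_fst.prodMk ((hW k).comp measurable_snd))
    have hv := ih (fun j hj => hf j (by omega)) (fun j hj => hφ j (by omega))
    exact ((hf k k.lt_succ_self).comp (hstep.prodMk (hv.comp hstep))).stronglyMeasurable
      |>.integral_prod_right'.measurable

lemma measurable_dataSecondMoment [SFinite P] (hg : Measurable g) {k : ℕ}
    (hf : ∀ j < k, Measurable (Function.uncurry (f j)))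
    (hφ : ∀ j < k, Measurable (Function.uncurry (φ j))) (hW : ∀ j, Measurable (W j)) :
    Measurable (dataSecondMoment g f φ W P k) := by
  induction k with
  | zero => exact ENNReal.measurable_ofReal.comp (hg.pow_const 2)
  | succ k ih =>
    have hstep : Measurable fun q : α × Ω => φ k q.1 (W k q.2) :=
      (hφ k k.lt_succ_self).comp (measurable_fst.prodMk ((hW k).comp measurable_snd))
    have hB := ih (fun j hj => hf j (by omega)) (fun j hj => hφ j (by omega))
    have hf0 : Measurable fun y => ENNReal.ofReal (f k y 0 ^ 2) :=
      ENNReal.measurable_ofReal.comp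
        (((hf k k.lt_succ_self).comp (measurable_id.prodMk measurable_const)).pow_const 2)
    exact ((hf0.add hB).comp hstep).lintegral_prod_right'

lemma ofReal_sq_exactSolution_le [IsProbabilityMeasure P] {L : ℝ} (hg : Measurable g) {k : ℕ}
    (hf : ∀ j < k, Measurable (Function.uncurry (f j)))
    (hfL : ∀ j < k, ∀ y a b, |f j y a - f j y b| ≤ L * |a - b|)
    (hφ : ∀ j < k, Measurable (Function.uncurry (φ j))) (hW : ∀ j, Measurable (W j)) (x : α) :
    ENNReal.ofReal (exactSolution g f φ W P k x ^ 2)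
      ≤ ENNReal.ofReal (2 + 2 * L ^ 2) ^ k * dataSecondMoment g f φ W P k x := by
  induction k generalizing x with
  | zero => simp [exactSolution, dataSecondMoment]
  | succ k ih =>
    have hstep : Measurable fun ω => φ k x (W k ω) :=
      (hφ k k.lt_succ_self).comp (measurable_const.prodMk (hW k))
    have hv := measurable_exactSolution (P := P) (k := k) hg (fun j hj => hf j (by omega))
      (fun j hj => hφ j (by omega)) hW
    calc ENNReal.ofReal (exactSolution g f φ W P (k + 1) x ^ 2)
        ≤ ∫⁻ ω, ENNReal.ofReal
            (f k (φ k x (W k ω)) (exactSolution g f φ W P k (φ k x (W k ω))) ^ 2) ∂P :=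
          ofReal_sq_integral_le
            ((hf k k.lt_succ_self).comp (hstep.prodMk (hv.comp hstep))).aemeasurable
      _ ≤ ∫⁻ ω, ENNReal.ofReal (2 + 2 * L ^ 2) ^ (k + 1) * (ENNReal.ofReal
            (f k (φ k x (W k ω)) 0 ^ 2) + dataSecondMoment g f φ W P k (φ k x (W k ω))) ∂P :=
          lintegral_mono fun ω => ofReal_sq_le_pow_succ_mul
            (by simpa using hfL k k.lt_succ_self (φ k x (W k ω)) _ 0)
            (ih (fun j hj => hf j (by omega)) (fun j hj => hfL j (by omega))
              (fun j hj => hφ j (by omega)) _)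
      _ = _ := lintegral_const_mul' _ _ (ENNReal.pow_ne_top ENNReal.ofReal_ne_top)

end

namespace IsBackwardChain

variable [MeasurableSpace α] [MeasurableSpace S] [MeasurableSpace Ω]
  {g : α → ℝ} {f : ℕ → α → ℝ → ℝ} {φ : ℕ → α → S → α} {W : ℕ → Ω → S} {P : Measure Ω}
  {k K : ℕ} {x : α} {Y : ℕ → Ω → α}

lemma lintegral_dataSecondMoment [IsFiniteMeasure P] (hY : IsBackwardChain φ W k x Y)
    (hkK : k ≤ K) (hg : Measurable g) (hf : ∀ j < k, Measurable (Function.uncurry (f j)))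
    (hφ : ∀ j < k, Measurable (Function.uncurry (φ j))) (hW : ∀ j, Measurable (W j))
    (hind : iIndepFun (fun i : Fin (K + 1) => W i) P) {l : ℕ} (hl : l ≤ k) :
    ∫⁻ ω, dataSecondMoment g f φ W P l (Y l ω) ∂P
      = ∫⁻ ω, ENNReal.ofReal (g (Y 0 ω) ^ 2 + ∑ j ∈ Finset.range l, f j (Y j ω) 0 ^ 2) ∂P := by
  induction l with
  | zero => simp [dataSecondMoment]
  | succ l ih =>
    have hYl : Measurable (Y l) :=
      hY.measurable_of_le (by omega) (fun j _ hj => hφ j hj) fun j _ _ => hW j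
    have hf0 : Measurable fun y => ENNReal.ofReal (f l y 0 ^ 2) :=
      ENNReal.measurable_ofReal.comp
        (((hf l hl).comp (measurable_id.prodMk measurable_const)).pow_const 2)
    have hF : Measurable fun ω => ENNReal.ofReal (f l (Y l ω) 0 ^ 2) := hf0.comp hYl
    have hB := measurable_dataSecondMoment (P := P) (k := l) hg (fun j hj => hf j (by omega))
      (fun j hj => hφ j (by omega)) hW
    calc ∫⁻ ω, dataSecondMoment g f φ W P (l + 1) (Y (l + 1) ω) ∂P
        = ∫⁻ ω, (ENNReal.ofReal (f l (Y l ω) 0 ^ 2)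
            + dataSecondMoment g f φ W P l (Y l ω)) ∂P :=
          hY.lintegral_lintegral_step hkK hl hφ hW hind (hf0.add hB)
      _ = ∫⁻ ω, (ENNReal.ofReal (f l (Y l ω) 0 ^ 2) + ENNReal.ofReal
            (g (Y 0 ω) ^ 2 + ∑ j ∈ Finset.range l, f j (Y j ω) 0 ^ 2)) ∂P := by
          rw [lintegral_add_left hF, lintegral_add_left hF, ih (by omega)]
      _ = ∫⁻ ω, ENNReal.ofReal
            (g (Y 0 ω) ^ 2 + ∑ j ∈ Finset.range (l + 1), f j (Y j ω) 0 ^ 2) ∂P := by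
          refine lintegral_congr fun ω => ?_
          rw [Finset.sum_range_succ, ← add_assoc, add_comm, ENNReal.ofReal_add (by positivity)
            (sq_nonneg _)]

lemma lintegral_dataSecondMoment_lt_top [IsFiniteMeasure P] (hY : IsBackwardChain φ W k x Y)
    (hkK : k ≤ K) (hg : Measurable g) (hf : ∀ j < k, Measurable (Function.uncurry (f j)))
    (hφ : ∀ j < k, Measurable (Function.uncurry (φ j))) (hW : ∀ j, Measurable (W j))
    (hind : iIndepFun (fun i : Fin (K + 1) => W i) P)
    (hmoment : ∫⁻ ω, ENNReal.ofReal
      (g (Y 0 ω) ^ 2 + ∑ j ∈ Finset.range k, f j (Y j ω) 0 ^ 2) ∂P < ⊤)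
    {l : ℕ} (hl : l ≤ k) :
    ∫⁻ ω, dataSecondMoment g f φ W P l (Y l ω) ∂P < ⊤ := by
  rw [hY.lintegral_dataSecondMoment hkK hg hf hφ hW hind hl]
  refine lt_of_le_of_lt (lintegral_mono fun ω => ENNReal.ofReal_le_ofReal ?_) hmoment
  gcongr

lemma lintegral_exactSolution_lt_top [IsProbabilityMeasure P] {m : ℕ} {L : ℝ}
    (hY : IsBackwardChain φ W (m + 1) x Y) (hg : Measurable g)
    (hf : ∀ j < m + 1, Measurable (Function.uncurry (f j)))
    (hfL : ∀ j < m + 1, ∀ y a b, |f j y a - f j y b| ≤ L * |a - b|)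
    (hφ : ∀ j < m + 1, Measurable (Function.uncurry (φ j))) (hW : ∀ j, Measurable (W j))
    (hB : ∀ l ≤ m + 1, ∫⁻ ω, dataSecondMoment g f φ W P l (Y l ω) ∂P < ⊤) :
    ∫⁻ ω, ENNReal.ofReal (|f m (Y m ω) (exactSolution g f φ W P m (Y m ω))|
      + ∑ l ∈ Finset.Icc 1 (m + 1), exactSolution g f φ W P l (Y l ω) ^ 2) ∂P < ⊤ := by
  set v := exactSolution g f φ W P
  set B := dataSecondMoment g f φ W P
  set C := ENNReal.ofReal (2 + 2 * L ^ 2)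
  have hC : ∀ n, C ^ n ≠ ⊤ := fun n => ENNReal.pow_ne_top ENNReal.ofReal_ne_top
  have hYm : ∀ l ≤ m + 1, Measurable (Y l) := fun l hl =>
    hY.measurable_of_le hl (fun j _ hj => hφ j hj) fun j _ _ => hW j
  have hvm : ∀ l ≤ m + 1, Measurable (v l) := fun l hl =>
    measurable_exactSolution hg (fun j hj => hf j (by omega)) (fun j hj => hφ j (by omega)) hW
  have hvY : ∀ l ≤ m + 1, Measurable fun ω => ENNReal.ofReal (v l (Y l ω) ^ 2) := fun l hl =>
    ENNReal.measurable_ofReal.comp (((hvm l hl).comp (hYm l hl)).pow_const 2)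
  have hfY : Measurable fun ω => ENNReal.ofReal |f m (Y m ω) (v m (Y m ω))| :=
    ENNReal.measurable_ofReal.comp ((hf m m.lt_succ_self).comp
      ((hYm m m.le_succ).prodMk ((hvm m m.le_succ).comp (hYm m m.le_succ)))).abs
  have hsq : ∀ l ≤ m + 1, ∫⁻ ω, ENNReal.ofReal (v l (Y l ω) ^ 2) ∂P < ⊤ := fun l hl =>
    calc ∫⁻ ω, ENNReal.ofReal (v l (Y l ω) ^ 2) ∂P ≤ ∫⁻ ω, C ^ l * B l (Y l ω) ∂P :=
          lintegral_mono fun ω => ofReal_sq_exactSolution_le hg (fun j hj => hf j (by omega))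
            (fun j hj => hfL j (by omega)) (fun j hj => hφ j (by omega)) hW _
      _ = C ^ l * ∫⁻ ω, B l (Y l ω) ∂P := lintegral_const_mul' _ _ (hC l)
      _ < ⊤ := ENNReal.mul_lt_top (lt_top_iff_ne_top.mpr (hC l)) (hB l hl)
  have hBx : B (m + 1) x < ⊤ := by
    simpa [funext hY.start] using hB (m + 1) le_rfl
  have hfin : ∫⁻ ω, ENNReal.ofReal |f m (Y m ω) (v m (Y m ω))| ∂P < ⊤ :=
    calc ∫⁻ ω, ENNReal.ofReal |f m (Y m ω) (v m (Y m ω))| ∂P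
        ≤ ∫⁻ ω, (1 + C ^ (m + 1) * (ENNReal.ofReal (f m (Y m ω) 0 ^ 2) + B m (Y m ω))) ∂P :=
          lintegral_mono fun ω => (ofReal_abs_le_one_add_ofReal_sq _).trans <| add_le_add_right
            (ofReal_sq_le_pow_succ_mul (by simpa using hfL m m.lt_succ_self (Y m ω) _ 0)
              (ofReal_sq_exactSolution_le hg (fun j hj => hf j (by omega))
                (fun j hj => hfL j (by omega)) (fun j hj => hφ j (by omega)) hW _)) _
      _ = 1 + C ^ (m + 1) * B (m + 1) x := by
          rw [lintegral_add_left measurable_const, lintegral_const_mul' _ _ (hC _)]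
          simp [B, dataSecondMoment, hY.step m m.lt_succ_self, hY.start]
      _ < ⊤ := ENNReal.add_lt_top.mpr
          ⟨ENNReal.one_lt_top, ENNReal.mul_lt_top (lt_top_iff_ne_top.mpr (hC _)) hBx⟩
  calc ∫⁻ ω, ENNReal.ofReal (|f m (Y m ω) (v m (Y m ω))|
        + ∑ l ∈ Finset.Icc 1 (m + 1), v l (Y l ω) ^ 2) ∂P
      = ∫⁻ ω, ENNReal.ofReal |f m (Y m ω) (v m (Y m ω))| ∂P
          + ∑ l ∈ Finset.Icc 1 (m + 1), ∫⁻ ω, ENNReal.ofReal (v l (Y l ω) ^ 2) ∂P := by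
        rw [← lintegral_finsetSum _ fun l hl => hvY l (Finset.mem_Icc.mp hl).2,
          ← lintegral_add_left hfY]
        refine lintegral_congr fun ω => ?_
        rw [ENNReal.ofReal_add (abs_nonneg _) (by positivity),
          ENNReal.ofReal_sum_of_nonneg fun l _ => sq_nonneg _]
    _ < ⊤ := ENNReal.add_lt_top.mpr ⟨hfin, ENNReal.sum_lt_top.mpr fun l hl =>
        hsq l (Finset.mem_Icc.mp hl).2⟩

end IsBackwardChain

end

theorem welldefinedness_exact_solution_general
    (d K : ℕ) (L : ℝ)
    (O : Set (Fin d → ℝ))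
    (f : ℕ → O → ℝ → ℝ) (hf : ∀ k, k ≤ K → Measurable (fun q : O × ℝ => f k q.1 q.2))
    (hfL : ∀ (k : ℕ) (x : O) (a b : ℝ), k ≤ K → |f k x a - f k x b| ≤ L * |a - b|)
    (g : O → ℝ) (hg : Measurable g)
    {S : Type*} [MeasurableSpace S]
    (φ : ℕ → O → S → O) (hφ : ∀ k, k ≤ K → Measurable (fun q : O × S => φ k q.1 q.2))
    {Ω : Type*} [MeasurableSpace Ω] (P : Measure Ω) [IsProbabilityMeasure P]
    (W : ℕ → Ω → S) (hWmeas : ∀ k, Measurable (W k))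
    (hWindep : iIndepFun
      (fun k : Fin (K + 1) => W k) P)
    (X : ℕ → ℕ → O → Ω → O)
    (hXk : ∀ (k : ℕ) (x : O) (ω : Ω), k ≤ K → X k k x ω = x)
    (hXl : ∀ (k l : ℕ) (x : O) (ω : Ω), l < k → k ≤ K →
      X k l x ω = φ l (X k (l + 1) x ω) (W l ω))
    (hBound : ∀ (k : ℕ) (x : O), k ≤ K →
      ∫⁻ ω, ENNReal.ofReal ((g (X k 0 x ω)) ^ 2
        + ∑ l ∈ Finset.range k, (f l (X k l x ω) 0) ^ 2) ∂P < ⊤)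
    :
    ∃ v : ℕ → O → ℝ, (∀ k, k ≤ K → Measurable (v k)) ∧ (∀ x : O, v 0 x = g x) ∧
      ∀ (k : ℕ) (x : O), 1 ≤ k → k ≤ K →
        (∫⁻ ω, ENNReal.ofReal
            (|f (k - 1) (X k (k - 1) x ω) (v (k - 1) (X k (k - 1) x ω))|
              + ∑ l ∈ Finset.Icc 1 k, (v l (X k l x ω)) ^ 2) ∂P < ⊤) ∧
        v k x = ∫ ω, f (k - 1) (X k (k - 1) x ω) (v (k - 1) (X k (k - 1) x ω)) ∂P := by
  refine ⟨exactSolution g f φ W P,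
    fun k hk => measurable_exactSolution hg (fun j hj => hf j (by omega))
      (fun j hj => hφ j (by omega)) hWmeas, fun _ => rfl, ?_⟩
  rintro (_ | m) x hk hkK
  · omega
  have hX : IsBackwardChain φ W (m + 1) x (fun l => X (m + 1) l x) :=
    ⟨fun ω => hXk _ x ω hkK, fun l hl ω => hXl _ l x ω hl hkK⟩
  simp only [Nat.add_sub_cancel]
  refine ⟨hX.lintegral_exactSolution_lt_top hg (fun j hj => hf j (by omega))
    (fun j hj y a b => hfL j y a b (by omega)) (fun j hj => hφ j (by omega)) hWmeas
    fun l hl => hX.lintegral_dataSecondMoment_lt_top hkK hg (fun j hj => hf j (by omega))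
      (fun j hj => hφ j (by omega)) hWmeas hWindep (hBound (m + 1) x hkK) hl, ?_⟩
  simp only [hX.step m m.lt_succ_self, hX.start]
  rfl

theorem welldefinedness_exact_solution
    (d K : ℕ) (hd : 0 < d) (hK : 0 < K) (L : ℝ)
    (O : Set (Fin d → ℝ)) (hOmeas : MeasurableSet O) (hOne : O.Nonempty)
    (f : ℕ → O → ℝ → ℝ) (hf : ∀ k, k ≤ K → Measurable (fun q : O × ℝ => f k q.1 q.2))
    (hfL : ∀ (k : ℕ) (x : O) (a b : ℝ), k ≤ K → |f k x a - f k x b| ≤ L * |a - b|)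
    (g : O → ℝ) (hg : Measurable g)
    {S : Type*} [MeasurableSpace S]
    (φ : ℕ → O → S → O) (hφ : ∀ k, k ≤ K → Measurable (fun q : O × S => φ k q.1 q.2))
    {Ω : Type*} [MeasurableSpace Ω] (P : Measure Ω) [IsProbabilityMeasure P]
    (W : ℕ → Ω → S) (hWmeas : ∀ k, Measurable (W k))
    (hWindep : iIndepFun
      (fun k : Fin (K + 1) => W k) P)
    (X : ℕ → ℕ → O → Ω → O)
    (hXk : ∀ (k : ℕ) (x : O) (ω : Ω), k ≤ K → X k k x ω = x)
    (hXl : ∀ (k l : ℕ) (x : O) (ω : Ω), l < k → k ≤ K →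
      X k l x ω = φ l (X k (l + 1) x ω) (W l ω))
    (hBound : ∀ (k : ℕ) (x : O), k ≤ K →
      ∫⁻ ω, ENNReal.ofReal ((g (X k 0 x ω)) ^ 2
        + ∑ l ∈ Finset.range k, (f l (X k l x ω) 0) ^ 2) ∂P < ⊤)
    :
    ∃ v : ℕ → O → ℝ, (∀ k, k ≤ K → Measurable (v k)) ∧ (∀ x : O, v 0 x = g x) ∧
      ∀ (k : ℕ) (x : O), 1 ≤ k → k ≤ K →
        (∫⁻ ω, ENNReal.ofReal
            (|f (k - 1) (X k (k - 1) x ω) (v (k - 1) (X k (k - 1) x ω))|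
              + ∑ l ∈ Finset.Icc 1 k, (v l (X k l x ω)) ^ 2) ∂P < ⊤) ∧
        v k x = ∫ ω, f (k - 1) (X k (k - 1) x ω) (v (k - 1) (X k (k - 1) x ω)) ∂P :=
  welldefinedness_exact_solution_general d K L O f hf hfL g hg φ hφ P W hWmeas hWindep X hXk hXl
    hBound
end

section
/- Let d,K ∈ ℕ, L_0,…,L_K ∈ ℝ, let 𝒪 ∈ ℬ(ℝ^d)\{∅} be a nonempty Borel set, let f_k : 𝒪 × ℝ → ℝ, k ∈ {0,…,K}, be Borel measurable with |(f_k(x,a) − a) − (f_k(x,b) − b)| ≤ L_k|a − b| for all k, x, a, b, let g : 𝒪 → ℝ be Borel measurable, let (S,𝒮) be a measurable space, let φ_k : 𝒪 × S → 𝒪 be jointly measurable, let W_k : Ω → S, k ∈ {0,…,K}, be independent random variables on a probability space (Ω,ℱ,ℙ), define X^{k,x}_l by X^{k,x}_k = x and X^{k,x}_l = φ_l(X^{k,x}_{l+1}, W_l) for l < k, assume E[|g(X^{k,x}_0)|² + Σ_{l=0}^{k−1} |f_l(X^{k,x}_l,0)|²] < ∞ for all k, x, and let v_0,…,v_K : 𝒪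 → ℝ be Borel measurable functions satisfying v_0 = g and v_k(x) = E[f_{k−1}(X^{k,x}_{k−1}, v_{k−1}(X^{k,x}_{k−1}))] for all k ∈ {1,…,K}, x ∈ 𝒪. Then for all k ∈ {0,…,K} and x ∈ 𝒪 it holds that (E[|v_k(X^{K,x}_k)|²])^{1/2} ≤ exp(Σ_{l=0}^{K−1} L_l)·[(E[|g(X^{K,x}_0)|²])^{1/2} + Σ_{l=0}^{K−1} (E[|f_l(X^{K,x}_l,0)|²])^{1/2}]. -/
/-!
Write `‖·‖` for the `L²(P)` norm. The state `X^{K,x}_{j+1}` is a function of `W_{j+1}, …, W_{K-1}`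
only, hence independent of `W_j`; so Jensen's inequality applied inside the defining expectation
of `v_{j+1}`, followed by Fubini over the law of `(X^{K,x}_{j+1}, W_j)`, gives
`‖v_{j+1}(X^{K,x}_{j+1})‖ ≤ ‖f_j(X^{K,x}_j, v_j(X^{K,x}_j))‖`. The Lipschitz condition on
`a ↦ f_j(x, a) - a` yields `|f_j(x, a)| ≤ (1 + L_j)|a| + |f_j(x, 0)|`, and Minkowski's inequality
turns this into `‖v_{j+1}(X_{j+1})‖ ≤ (1 + L_j)‖v_j(X_j)‖ + ‖f_j(X_j, 0)‖`. A discrete Grönwall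
argument with `1 + L_j ≤ exp L_j` concludes.
-/

open MeasureTheory ProbabilityTheory Finset Function
open scoped ENNReal

theorem ENNReal.discrete_gronwall {a b : ℕ → ℝ≥0∞} {L : ℕ → ℝ} {k : ℕ} (hL : ∀ n < k, 0 ≤ L n)
    (ha : ∀ n < k, a (n + 1) ≤ ENNReal.ofReal (1 + L n) * a n + b n) :
    a k ≤ ENNReal.ofReal (Real.exp (∑ l ∈ range k, L l)) * (a 0 + ∑ l ∈ range k, b l) := by
  induction k with
  | zero => simp
  | succ n ih =>
    have hexp : 1 ≤ ENNReal.ofReal (Real.exp (∑ l ∈ range (n + 1), L l)) := by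
      rw [← ENNReal.ofReal_one]
      exact ENNReal.ofReal_le_ofReal
        (Real.one_le_exp (sum_nonneg fun l hl => hL l (mem_range.mp hl)))
    calc a (n + 1)
        ≤ ENNReal.ofReal (Real.exp (L n)) *
            (ENNReal.ofReal (Real.exp (∑ l ∈ range n, L l)) * (a 0 + ∑ l ∈ range n, b l))
          + b n := by
          grw [ha n n.lt_succ_self, ih (fun m hm => hL m (by omega)) (fun m hm => ha m (by omega))]
          gcongr
          linarith [Real.add_one_le_exp (L n)]
      _ ≤ ENNReal.ofReal (Real.exp (∑ l ∈ range (n + 1), L l)) * (a 0 + ∑ l ∈ range n, b l)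
          + ENNReal.ofReal (Real.exp (∑ l ∈ range (n + 1), L l)) * b n := by
          rw [← mul_assoc, ← ENNReal.ofReal_mul (Real.exp_nonneg _), ← Real.exp_add,
            add_comm (L n), ← sum_range_succ]
          gcongr
          exact le_mul_of_one_le_left zero_le hexp
      _ = _ := by rw [← mul_add, add_assoc, ← sum_range_succ]

theorem eLpNorm_two_eq_lintegral_ofReal_sq {Ω : Type*} [MeasurableSpace Ω] (μ : Measure Ω)
    (h : Ω → ℝ) :
    eLpNorm h 2 μ = (∫⁻ ω, ENNReal.ofReal (h ω ^ 2) ∂μ) ^ ((1 : ℝ) / 2) := by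
  rw [eLpNorm_eq_lintegral_rpow_enorm_toReal two_ne_zero ENNReal.ofNat_ne_top]
  simp [Real.enorm_eq_ofReal_abs, ← ENNReal.ofReal_pow (abs_nonneg _)]

theorem enorm_integral_rpow_le_lintegral {Ω E : Type*} [MeasurableSpace Ω] [NormedAddCommGroup E]
    [NormedSpace ℝ E] {P : Measure Ω} [IsProbabilityMeasure P] {h : Ω → E}
    (hh : AEStronglyMeasurable h P) {p : ℝ≥0∞} (hp1 : 1 ≤ p) (hp : p ≠ ∞) :
    ‖∫ ω, h ω ∂P‖ₑ ^ p.toReal ≤ ∫⁻ ω, ‖h ω‖ₑ ^ p.toReal ∂P := by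
  have hp0 : p ≠ 0 := (zero_lt_one.trans_le hp1).ne'
  calc ‖∫ ω, h ω ∂P‖ₑ ^ p.toReal ≤ eLpNorm h p P ^ p.toReal := by
        gcongr
        calc ‖∫ ω, h ω ∂P‖ₑ ≤ eLpNorm h 1 P :=
              (enorm_integral_le_lintegral_enorm h).trans_eq eLpNorm_one_eq_lintegral_enorm.symm
          _ ≤ eLpNorm h p P := eLpNorm_le_eLpNorm_of_exponent_le hp1 hh
    _ = ∫⁻ ω, ‖h ω‖ₑ ^ p.toReal ∂P := by
        rw [eLpNorm_eq_lintegral_rpow_enorm_toReal hp0 hp, ← ENNReal.rpow_mul,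
          one_div_mul_cancel (ENNReal.toReal_ne_zero.mpr ⟨hp0, hp⟩), ENNReal.rpow_one]

theorem abs_le_one_add_mul_abs_add_abs_of_abs_sub_id_sub_le {F : ℝ → ℝ} {L : ℝ}
    (hF : ∀ a b, |(F a - a) - (F b - b)| ≤ L * |a - b|) (a : ℝ) :
    |F a| ≤ (1 + L) * |a| + |F 0| := by
  have h := hF a 0
  rw [sub_zero, sub_zero] at h
  calc |F a| = |(F a - a - F 0) + a + F 0| := by ring_nf
    _ ≤ |F a - a - F 0| + |a| + |F 0| := abs_add_three _ _ _
    _ ≤ (1 + L) * |a| + |F 0| := by linarith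

theorem eLpNorm_comp_le_of_abs_sub_id_sub_le {Ω : Type*} [MeasurableSpace Ω] {μ : Measure Ω}
    {p : ℝ≥0∞} (hp : 1 ≤ p) {F : Ω → ℝ → ℝ} {u : Ω → ℝ} {L : ℝ} (hL : 0 ≤ L)
    (hF : ∀ ω a b, |(F ω a - a) - (F ω b - b)| ≤ L * |a - b|)
    (hu : AEStronglyMeasurable u μ) (hF0 : AEStronglyMeasurable (fun ω => F ω 0) μ) :
    eLpNorm (fun ω => F ω (u ω)) p μ
      ≤ ENNReal.ofReal (1 + L) * eLpNorm u p μ + eLpNorm (fun ω => F ω 0) p μ :=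
  calc eLpNorm (fun ω => F ω (u ω)) p μ
      ≤ eLpNorm (fun ω => (1 + L) * ‖u ω‖ + ‖F ω 0‖) p μ :=
        eLpNorm_mono_real fun ω =>
          abs_le_one_add_mul_abs_add_abs_of_abs_sub_id_sub_le (hF ω) (u ω)
    _ ≤ eLpNorm ((1 + L) • fun ω => ‖u ω‖) p μ + eLpNorm (fun ω => ‖F ω 0‖) p μ :=
        eLpNorm_add_le (hu.norm.const_mul _) hF0.norm hp
    _ = ENNReal.ofReal (1 + L) * eLpNorm u p μ + eLpNorm (fun ω => F ω 0) p μ := by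
        rw [eLpNorm_const_smul, eLpNorm_norm, eLpNorm_norm, Real.enorm_of_nonneg (by linarith)]

section Independent

variable {Ω α β E : Type*} [MeasurableSpace Ω] [MeasurableSpace α] [MeasurableSpace β]
  [NormedAddCommGroup E] [NormedSpace ℝ E] {P : Measure Ω} [IsProbabilityMeasure P]
  {Y : Ω → α} {Z : Ω → β}

theorem ProbabilityTheory.IndepFun.lintegral_comp_eq_lintegral_lintegral_s11 (hY : Measurable Y)
    (hZ : Measurable Z) (hYZ : IndepFun Y Z P) {H : α → β → ℝ≥0∞} (hH : Measurable (uncurry H)) :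
    ∫⁻ ω, H (Y ω) (Z ω) ∂P = ∫⁻ ω, ∫⁻ ω', H (Y ω) (Z ω') ∂P ∂P := by
  have hmap := (indepFun_iff_map_prod_eq_prod_map_map hY.aemeasurable hZ.aemeasurable).mp hYZ
  calc ∫⁻ ω, H (Y ω) (Z ω) ∂P
      = ∫⁻ q, uncurry H q ∂(P.map fun ω => (Y ω, Z ω)) := (lintegral_map hH (hY.prodMk hZ)).symm
    _ = ∫⁻ y, ∫⁻ z, H y z ∂(P.map Z) ∂(P.map Y) := by
        rw [hmap, lintegral_prod _ hH.aemeasurable]; rfl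
    _ = ∫⁻ ω, ∫⁻ z, H (Y ω) z ∂(P.map Z) ∂P := lintegral_map hH.lintegral_prod_right' hY
    _ = ∫⁻ ω, ∫⁻ ω', H (Y ω) (Z ω') ∂P ∂P :=
        lintegral_congr fun ω => lintegral_map (hH.comp measurable_prodMk_left) hZ

theorem ProbabilityTheory.IndepFun.eLpNorm_integral_comp_le (hY : Measurable Y)
    (hZ : Measurable Z) (hYZ : IndepFun Y Z P) {G : α → β → E} (hG : StronglyMeasurable (uncurry G))
    {p : ℝ≥0∞} (hp1 : 1 ≤ p) (hp : p ≠ ∞) :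
    eLpNorm (fun ω => ∫ ω', G (Y ω) (Z ω') ∂P) p P ≤ eLpNorm (fun ω => G (Y ω) (Z ω)) p P := by
  have hp0 : p ≠ 0 := (zero_lt_one.trans_le hp1).ne'
  simp only [eLpNorm_eq_lintegral_rpow_enorm_toReal hp0 hp]
  gcongr ?_ ^ _
  calc ∫⁻ ω, ‖∫ ω', G (Y ω) (Z ω') ∂P‖ₑ ^ p.toReal ∂P
      ≤ ∫⁻ ω, ∫⁻ ω', ‖G (Y ω) (Z ω')‖ₑ ^ p.toReal ∂P ∂P :=
        lintegral_mono fun ω => enorm_integral_rpow_le_lintegral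
          (hG.comp_measurable (measurable_const.prodMk hZ)).aestronglyMeasurable hp1 hp
    _ = ∫⁻ ω, ‖G (Y ω) (Z ω)‖ₑ ^ p.toReal ∂P :=
        (hYZ.lintegral_comp_eq_lintegral_lintegral_s11 (H := fun y z => ‖G y z‖ₑ ^ p.toReal) hY hZ
          (hG.enorm.pow_const _)).symm

end Independent

section BackwardRecursion

variable {Ω α S : Type*} [MeasurableSpace α] [mS : MeasurableSpace S] {φ : ℕ → α → S → α}
  {W : ℕ → Ω → S} {X : ℕ → Ω → α} {K : ℕ} {x : α}

theorem measurable_of_backward_recursion_s11 {m : MeasurableSpace Ω}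
    (hφ : ∀ i < K, Measurable (uncurry (φ i)))
    (hX : ∀ i < K, ∀ ω, X i ω = φ i (X (i + 1) ω) (W i ω)) (hXK : ∀ ω, X K ω = x)
    {l : ℕ} (hl : l ≤ K) (hW : ∀ i, l ≤ i → i < K → Measurable[m] (W i)) :
    Measurable[m] (X l) := by
  induction hl using Nat.decreasingInduction with
  | self => rw [funext hXK]; exact measurable_const
  | of_succ i hi ih =>
    rw [funext (hX i hi)]
    exact (hφ i hi).comp ((ih fun j hj hjK => hW j (by omega) hjK).prodMk (hW i le_rfl hi))

variable [MeasurableSpace Ω] {P : Measure Ω} {n : ℕ}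

theorem indepFun_backward_recursion (hKn : K ≤ n) (hWm : ∀ i, Measurable (W i))
    (hWind : iIndepFun (fun i : Fin n => W i) P) (hφ : ∀ i < K, Measurable (uncurry (φ i)))
    (hX : ∀ i < K, ∀ ω, X i ω = φ i (X (i + 1) ω) (W i ω)) (hXK : ∀ ω, X K ω = x)
    {j : ℕ} (hj : j < K) :
    IndepFun (X (j + 1)) (W j) P := by
  let 𝒢 : MeasurableSpace Ω := ⨆ i ∈ {i : Fin n | j < i}, mS.comap (W i)
  have hX𝒢 : Measurable[𝒢] (X (j + 1)) :=
    measurable_of_backward_recursion_s11 hφ hX hXK hj fun i hji hiK =>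
      Measurable.of_comap_le (le_iSup₂ (f := fun (i : Fin n) _ => mS.comap (W i))
        (⟨i, by omega⟩ : Fin n) hji)
  have h𝒢 : Indep 𝒢 (mS.comap (W j)) P := by
    simpa [𝒢] using indep_iSup_of_disjoint (fun i : Fin n => (hWm i).comap_le) hWind.iIndep
      (S := {i : Fin n | j < i}) (T := {⟨j, by omega⟩}) (by simp)
  exact indep_of_indep_of_le_left h𝒢 hX𝒢.comap_le

theorem eLpNorm_backward_recursion_step_le [IsProbabilityMeasure P] {E : Type*}
    [NormedAddCommGroup E] [NormedSpace ℝ E] (hKn : K ≤ n) (hWm : ∀ i, Measurable (W i))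
    (hWind : iIndepFun (fun i : Fin n => W i) P) (hφ : ∀ i < K, Measurable (uncurry (φ i)))
    (hX : ∀ i < K, ∀ ω, X i ω = φ i (X (i + 1) ω) (W i ω)) (hXK : ∀ ω, X K ω = x)
    {j : ℕ} (hj : j < K) {G : α → E} (hG : StronglyMeasurable G) {p : ℝ≥0∞} (hp1 : 1 ≤ p)
    (hp : p ≠ ∞) {u : α → E} (hu : ∀ y, u y = ∫ ω, G (φ j y (W j ω)) ∂P) :
    eLpNorm (fun ω => u (X (j + 1) ω)) p P ≤ eLpNorm (fun ω => G (X j ω)) p P := by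
  have hXj := measurable_of_backward_recursion_s11 hφ hX hXK hj fun i _ _ => hWm i
  simpa only [hu, ← hX j hj] using
    (indepFun_backward_recursion hKn hWm hWind hφ hX hXK hj).eLpNorm_integral_comp_le hXj (hWm j)
      (G := fun y s => G (φ j y s)) (hG.comp_measurable (hφ j hj)) hp1 hp

end BackwardRecursion

theorem a_priori_estimates_general
    (d K : ℕ) (L : ℕ → ℝ)
    (O : Set (Fin d → ℝ))
    (f : ℕ → O → ℝ → ℝ) (hf : ∀ k, k ≤ K → Measurable (fun q : O × ℝ => f k q.1 q.2))
    (hfL : ∀ (k : ℕ) (x : O) (a b : ℝ), k ≤ K →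
      |(f k x a - a) - (f k x b - b)| ≤ L k * |a - b|)
    (g : O → ℝ)
    {S : Type*} [MeasurableSpace S]
    (φ : ℕ → O → S → O) (hφ : ∀ k, k ≤ K → Measurable (fun q : O × S => φ k q.1 q.2))
    {Ω : Type*} [MeasurableSpace Ω] (P : Measure Ω) [IsProbabilityMeasure P]
    (W : ℕ → Ω → S) (hWmeas : ∀ k, Measurable (W k))
    (hWindep : iIndepFun
      (fun k : Fin (K + 1) => W k) P)
    (X : ℕ → ℕ → O → Ω → O)
    (hXk : ∀ (k : ℕ) (x : O) (ω : Ω), k ≤ K → X k k x ω = x)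
    (hXl : ∀ (k l : ℕ) (x : O) (ω : Ω), l < k → k ≤ K →
      X k l x ω = φ l (X k (l + 1) x ω) (W l ω))
    (v : ℕ → O → ℝ) (hvmeas : ∀ k, k ≤ K → Measurable (v k))
    (hv0 : ∀ x : O, v 0 x = g x)
    (hvrec : ∀ (k : ℕ) (x : O), 1 ≤ k → k ≤ K →
      v k x = ∫ ω, f (k - 1) (X k (k - 1) x ω) (v (k - 1) (X k (k - 1) x ω)) ∂P) :
    ∀ (k : ℕ) (x : O), k ≤ K →
      (∫⁻ ω, ENNReal.ofReal ((v k (X K k x ω)) ^ 2) ∂P) ^ ((1 : ℝ) / 2)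
        ≤ ENNReal.ofReal (Real.exp (∑ l ∈ Finset.range K, L l)) *
          ((∫⁻ ω, ENNReal.ofReal ((g (X K 0 x ω)) ^ 2) ∂P) ^ ((1 : ℝ) / 2)
            + ∑ l ∈ Finset.range K,
                (∫⁻ ω, ENNReal.ofReal ((f l (X K l x ω) 0) ^ 2) ∂P) ^ ((1 : ℝ) / 2)) := by
  intro k x hk
  have hL : ∀ l ≤ K, 0 ≤ L l := fun l hl => by
    simpa using (abs_nonneg _).trans (hfL l x 1 0 hl)
  have hφ' : ∀ i < K, Measurable (uncurry (φ i)) := fun i hi => hφ i hi.le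
  have hX : ∀ i < K, ∀ ω, X K i x ω = φ i (X K (i + 1) x ω) (W i ω) :=
    fun i hi ω => hXl K i x ω hi le_rfl
  have hXK : ∀ ω, X K K x ω = x := fun ω => hXk K x ω le_rfl
  have hstep : ∀ j < K, eLpNorm (fun ω => v (j + 1) (X K (j + 1) x ω)) 2 P
      ≤ ENNReal.ofReal (1 + L j) * eLpNorm (fun ω => v j (X K j x ω)) 2 P
        + eLpNorm (fun ω => f j (X K j x ω) 0) 2 P := by
    intro j hj
    have hXj := measurable_of_backward_recursion_s11 hφ' hX hXK hj.le fun i _ _ => hWmeas i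
    have hv : ∀ y, v (j + 1) y = ∫ ω, f j (φ j y (W j ω)) (v j (φ j y (W j ω))) ∂P := fun y => by
      rw [hvrec (j + 1) y j.succ_pos hj, Nat.add_sub_cancel]
      simp only [hXl (j + 1) j y _ (Nat.lt_add_one j) hj, hXk (j + 1) y _ hj]
    calc _ ≤ eLpNorm (fun ω => f j (X K j x ω) (v j (X K j x ω))) 2 P :=
          eLpNorm_backward_recursion_step_le (Nat.le_succ K) hWmeas hWindep hφ' hX hXK hj
            (G := fun y => f j y (v j y))
            ((hf j hj.le).comp (measurable_id.prodMk (hvmeas j hj.le))).stronglyMeasurable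
            one_le_two ENNReal.ofNat_ne_top hv
      _ ≤ _ := eLpNorm_comp_le_of_abs_sub_id_sub_le one_le_two (hL j hj.le)
          (fun ω a b => hfL j _ a b hj.le) ((hvmeas j hj.le).comp hXj).aestronglyMeasurable
          ((hf j hj.le).comp (hXj.prodMk measurable_const)).aestronglyMeasurable
  simp only [← eLpNorm_two_eq_lintegral_ofReal_sq, ← hv0]
  calc _ ≤ _ :=
        ENNReal.discrete_gronwall (fun l hl => hL l (by omega)) fun j hj => hstep j (by omega)
    _ ≤ _ := by
      gcongr
      exact fun l hl _ => hL l (mem_range.mp hl).le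

theorem a_priori_estimates
    (d K : ℕ) (hd : 0 < d) (hK : 0 < K) (L : ℕ → ℝ)
    (O : Set (Fin d → ℝ)) (hOmeas : MeasurableSet O) (hOne : O.Nonempty)
    (f : ℕ → O → ℝ → ℝ) (hf : ∀ k, k ≤ K → Measurable (fun q : O × ℝ => f k q.1 q.2))
    (hfL : ∀ (k : ℕ) (x : O) (a b : ℝ), k ≤ K →
      |(f k x a - a) - (f k x b - b)| ≤ L k * |a - b|)
    (g : O → ℝ) (hg : Measurable g)
    {S : Type*} [MeasurableSpace S]
    (φ : ℕ → O → S → O) (hφ : ∀ k, k ≤ K → Measurable (fun q : O × S => φ k q.1 q.2))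
    {Ω : Type*} [MeasurableSpace Ω] (P : Measure Ω) [IsProbabilityMeasure P]
    (W : ℕ → Ω → S) (hWmeas : ∀ k, Measurable (W k))
    (hWindep : iIndepFun
      (fun k : Fin (K + 1) => W k) P)
    (X : ℕ → ℕ → O → Ω → O)
    (hXk : ∀ (k : ℕ) (x : O) (ω : Ω), k ≤ K → X k k x ω = x)
    (hXl : ∀ (k l : ℕ) (x : O) (ω : Ω), l < k → k ≤ K →
      X k l x ω = φ l (X k (l + 1) x ω) (W l ω))
    (hBound : ∀ (k : ℕ) (x : O), k ≤ K →
      ∫⁻ ω, ENNReal.ofReal ((g (X k 0 x ω)) ^ 2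
        + ∑ l ∈ Finset.range k, (f l (X k l x ω) 0) ^ 2) ∂P < ⊤)
    (v : ℕ → O → ℝ) (hvmeas : ∀ k, k ≤ K → Measurable (v k))
    (hv0 : ∀ x : O, v 0 x = g x)
    (hvrec : ∀ (k : ℕ) (x : O), 1 ≤ k → k ≤ K →
      v k x = ∫ ω, f (k - 1) (X k (k - 1) x ω) (v (k - 1) (X k (k - 1) x ω)) ∂P) :
    ∀ (k : ℕ) (x : O), k ≤ K →
      (∫⁻ ω, ENNReal.ofReal ((v k (X K k x ω)) ^ 2) ∂P) ^ ((1 : ℝ) / 2)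
        ≤ ENNReal.ofReal (Real.exp (∑ l ∈ Finset.range K, L l)) *
          ((∫⁻ ω, ENNReal.ofReal ((g (X K 0 x ω)) ^ 2) ∂P) ^ ((1 : ℝ) / 2)
            + ∑ l ∈ Finset.range K,
                (∫⁻ ω, ENNReal.ofReal ((f l (X K l x ω) 0) ^ 2) ∂P) ^ ((1 : ℝ) / 2)) :=
  a_priori_estimates_general d K L O f hf hfL g φ hφ P W hWmeas hWindep X hXk hXl v hvmeas hv0 hvrec
end

section
/- Let K ∈ ℕ and L_0,…,L_{K−1} ∈ [0,∞) with Σ_{j=0}^{K−1} L_j > 0, and define α_k^{(q)} ∈ [0,∞) for q ∈ ℕ₀, k ∈ {0,…,K} by α_K^{(0)} = 1, α_k^{(0)} = 0 for k < K, and, for q ≥ 1 and k ∈ {0,…,K−1}, α_k^{(q)} = ([Σ_{j=k}^{K−1} L_j]^q − [Σ_{j=k+1}^{K−1} L_j]^q) / (q!·[Σ_{j=0}^{K−1} L_j]^q). Then for all k ∈ {0,…,K−1} and q ∈ ℕ₀ it holds that α_k^{(q+1)}·Σ_{j=0}^{K−1} L_j ≥ L_k·Σ_{j=k+1}^K α_j^{(q)}.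 -/
/-! With tail sums `T j = ∑ i ∈ [j, K), L i` and `S = T 0`, the coefficients `a q j` for `q ≥ 1` are
differences `(T j ^ q - T (j + 1) ^ q) / (q! S ^ q)`, so the sum over `j > k` telescopes to
`T (k + 1) ^ q / (q! S ^ q)` (also for `q = 0`). The claim then reduces to Bernoulli's inequality
`x ^ (q + 1) + (q + 1) x ^ q h ≤ (x + h) ^ (q + 1)` with `x = T (k + 1)` and `h = L k`. -/

open Finset Nat

lemma mul_pow_div_le_sub_pow_div {R : Type*} [Field R] [LinearOrder R] [IsStrictOrderedRing R]
    {x h c : R} (hx : 0 ≤ x) (hh : 0 ≤ h) (hc : 0 < c) (q : ℕ) :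
    h * (x ^ q / (q ! * c ^ q)) ≤
      ((h + x) ^ (q + 1) - x ^ (q + 1)) / ((q + 1)! * c ^ (q + 1)) * c := by
  have bernoulli : x ^ (q + 1) + (q + 1 : ℕ) * x ^ q * h ≤ (x + h) ^ (q + 1) :=
    pow_add_mul_le_add_pow hx (by linarith) (q + 1)
  push_cast at bernoulli
  have hq : (0 : R) < q ! := by exact_mod_cast q.factorial_pos
  calc h * (x ^ q / (q ! * c ^ q)) = (q + 1) * x ^ q * h / ((q + 1) * (q ! * c ^ q)) := by
        field_simp
    _ ≤ ((h + x) ^ (q + 1) - x ^ (q + 1)) / ((q + 1) * (q ! * c ^ q)) := by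
        gcongr
        rw [add_comm h]
        linarith
    _ = ((h + x) ^ (q + 1) - x ^ (q + 1)) / ((q + 1)! * c ^ (q + 1)) * c := by
        rw [factorial_succ]
        push_cast
        field_simp
        ring

lemma sum_Icc_alpha_eq {K : ℕ} {L : ℕ → ℝ} {a : ℕ → ℕ → ℝ}
    (ha0K : a 0 K = 1) (ha0 : ∀ k, k < K → a 0 k = 0)
    (haK : ∀ q, 1 ≤ q → a q K = 0)
    (ha : ∀ q, 1 ≤ q → ∀ k, k < K → a q k =
      ((∑ j ∈ Ico k K, L j) ^ q - (∑ j ∈ Ico (k + 1) K, L j) ^ q)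
        / ((q ! : ℝ) * (∑ j ∈ range K, L j) ^ q))
    {m : ℕ} (hm : m ≤ K) (q : ℕ) :
    ∑ j ∈ Icc m K, a q j = (∑ j ∈ Ico m K, L j) ^ q / (q ! * (∑ j ∈ range K, L j) ^ q) := by
  rw [← Ico_add_one_right_eq_Icc, sum_Ico_succ_top hm]
  rcases q.eq_zero_or_pos with rfl | hq
  · rw [ha0K, sum_eq_zero fun j hj => ha0 j (mem_Ico.mp hj).2]
    simp
  · set T := fun j => (∑ i ∈ Ico j K, L i) ^ q
    have telescope : ∑ j ∈ Ico m K, (T j - T (j + 1)) = T m - T K := by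
      simpa using congrArg Neg.neg (sum_Ico_sub T hm)
    rw [haK q hq, add_zero, sum_congr rfl fun j hj => ha q hq j (mem_Ico.mp hj).2, ← sum_div,
      telescope]
    simp [T, zero_pow hq.ne']

theorem special_alphas_general (K : ℕ) (L : ℕ → ℝ)
    (hL : ∀ k, k < K → 0 ≤ L k) (hLpos : 0 < ∑ j ∈ Finset.range K, L j)
    (a : ℕ → ℕ → ℝ)
    (ha0K : a 0 K = 1) (ha0 : ∀ k, k < K → a 0 k = 0)
    (haK : ∀ q, 1 ≤ q → a q K = 0)
    (ha : ∀ q, 1 ≤ q → ∀ k, k < K → a q k =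
      ((∑ j ∈ Finset.Ico k K, L j) ^ q - (∑ j ∈ Finset.Ico (k + 1) K, L j) ^ q)
        / ((Nat.factorial q : ℝ) * (∑ j ∈ Finset.range K, L j) ^ q)) :
    ∀ k, k < K → ∀ q : ℕ,
      L k * ∑ j ∈ Finset.Icc (k + 1) K, a q j
        ≤ a (q + 1) k * ∑ j ∈ Finset.range K, L j := by
  intro k hk q
  rw [sum_Icc_alpha_eq ha0K ha0 haK ha hk q, ha (q + 1) q.succ_pos k hk,
    sum_eq_sum_Ico_succ_bot hk]
  exact mul_pow_div_le_sub_pow_div (sum_nonneg fun j hj => hL j (mem_Ico.mp hj).2) (hL k hk)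
    hLpos q

theorem special_alphas (K : ℕ) (hK : 0 < K) (L : ℕ → ℝ)
    (hL : ∀ k, k < K → 0 ≤ L k) (hLpos : 0 < ∑ j ∈ Finset.range K, L j)
    (a : ℕ → ℕ → ℝ) (hanonneg : ∀ q k, k ≤ K → 0 ≤ a q k)
    (ha0K : a 0 K = 1) (ha0 : ∀ k, k < K → a 0 k = 0)
    (haK : ∀ q, 1 ≤ q → a q K = 0)
    (ha : ∀ q, 1 ≤ q → ∀ k, k < K → a q k =
      ((∑ j ∈ Finset.Ico k K, L j) ^ q - (∑ j ∈ Finset.Ico (k + 1) K, L j) ^ q)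
        / ((Nat.factorial q : ℝ) * (∑ j ∈ Finset.range K, L j) ^ q)) :
    ∀ k, k < K → ∀ q : ℕ,
      L k * ∑ j ∈ Finset.Icc (k + 1) K, a q j
        ≤ a (q + 1) k * ∑ j ∈ Finset.range K, L j :=
  special_alphas_general K L hL hLpos a ha0K ha0 haK ha
end

section
/- Let M ∈ ℕ, N ∈ ℕ₀, α, β, κ ∈ [0,∞), and let e_{n,q} ∈ [0,∞), n,q ∈ ℕ₀, satisfy for all n ∈ {0,…,N} and q ∈ ℕ₀ that e_{n,q} ≤ α·√(κ^q)/√(q!·M^n) + β·Σ_{l=0}^{n−1} e_{l,q+1}/√(M^{n−1−l}). Then e_{N,0} ≤ α·exp(κM/2)·(1+β)^N / M^{N/2}. -/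
/-!
Multiplying by `√(M ^ (n + q))` normalises the recursion to
`f n q ≤ α * √((κ M) ^ q / q!) + β * ∑_{l < n} f l (q + 1)` for `f n q = e n q * √(M ^ (n + q))`.
The exponential series bounds the first term by `α * exp (κ M / 2)` uniformly in `q`, and then a
discrete Gronwall induction on `n` gives `f n q ≤ α * exp (κ M / 2) * (1 + β) ^ n`, since
`1 + β * ∑_{l < n} (1 + β) ^ l = (1 + β) ^ n`.
-/

open Finset Real
open scoped Nat

theorem le_mul_one_add_pow_of_le_add_sum {f : ℕ → ℕ → ℝ} {A β : ℝ} {N : ℕ} (hβ : 0 ≤ β)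
    (hf : ∀ n ≤ N, ∀ q, f n q ≤ A + β * ∑ l ∈ range n, f l (q + 1)) :
    ∀ n ≤ N, ∀ q, f n q ≤ A * (1 + β) ^ n := by
  intro n
  induction n using Nat.strong_induction_on with
  | _ n ih =>
    intro hn q
    have hsum : β * ∑ l ∈ range n, f l (q + 1) ≤ β * ∑ l ∈ range n, A * (1 + β) ^ l := by
      gcongr with l hl
      exact ih l (mem_range.mp hl) (by grind) (q + 1)
    have hgeom : β * ∑ l ∈ range n, A * (1 + β) ^ l = A * ((1 + β) ^ n - 1) := by
      rw [← mul_sum, ← geom_sum_mul]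
      ring
    linarith [hf n hn q]

theorem sqrt_pow_mul_sqrt_pow_div_sqrt_le_exp {κ M : ℝ} (hκ : 0 ≤ κ) (hM : 0 < M) (n q : ℕ) :
    √(κ ^ q) * √(M ^ (n + q)) / √((q ! : ℝ) * M ^ n) ≤ exp (κ * M / 2) := by
  have hsimp : κ ^ q * M ^ (n + q) / (q ! * M ^ n) = (κ * M) ^ q / q ! := by
    field_simp
    ring
  rw [← sqrt_mul (by positivity), ← sqrt_div' _ (by positivity), hsimp, exp_half]
  exact sqrt_le_sqrt (pow_div_factorial_le_exp _ (by positivity) q)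

theorem div_sqrt_pow_mul_sqrt_pow {M : ℝ} (hM : 0 < M) (x : ℝ) {l n : ℕ} (hl : l < n) (q : ℕ) :
    x / √(M ^ (n - 1 - l)) * √(M ^ (n + q)) = x * √(M ^ (l + (q + 1))) := by
  rw [div_mul_eq_mul_div, div_eq_iff (by positivity), mul_assoc, ← sqrt_mul (by positivity),
    ← pow_add]
  grind

theorem gronwall_type_inequality_general (M : ℕ) (hM : 0 < M) (N : ℕ)
    (α β κ : ℝ) (hα : 0 ≤ α) (hβ : 0 ≤ β) (hκ : 0 ≤ κ)
    (e : ℕ → ℕ → ℝ)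
    (hrec : ∀ n, n ≤ N → ∀ q : ℕ, e n q ≤
      α * Real.sqrt (κ ^ q) / Real.sqrt ((Nat.factorial q : ℝ) * (M : ℝ) ^ n)
      + β * ∑ l ∈ Finset.range n, e l (q + 1) / Real.sqrt ((M : ℝ) ^ (n - 1 - l))) :
    e N 0 ≤ α * Real.exp (κ * M / 2) * (1 + β) ^ N / Real.sqrt ((M : ℝ) ^ N) := by
  have hMpos : (0 : ℝ) < M := by exact_mod_cast hM
  have hbound := le_mul_one_add_pow_of_le_add_sum (f := fun n q => e n q * √((M : ℝ) ^ (n + q)))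
    (A := α * exp (κ * M / 2)) hβ ?_ N le_rfl 0
  · rw [le_div_iff₀ (by positivity)]
    simpa using hbound
  intro n hn q
  calc e n q * √((M : ℝ) ^ (n + q))
      ≤ (α * √(κ ^ q) / √((q ! : ℝ) * M ^ n)
          + β * ∑ l ∈ range n, e l (q + 1) / √((M : ℝ) ^ (n - 1 - l))) * √((M : ℝ) ^ (n + q)) :=
        mul_le_mul_of_nonneg_right (hrec n hn q) (by positivity)
    _ = α * (√(κ ^ q) * √((M : ℝ) ^ (n + q)) / √((q ! : ℝ) * M ^ n))
          + β * ∑ l ∈ range n, e l (q + 1) * √((M : ℝ) ^ (l + (q + 1))) := by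
        rw [← sum_congr rfl fun l hl => div_sqrt_pow_mul_sqrt_pow hMpos _ (mem_range.mp hl) q,
          ← sum_mul]
        ring
    _ ≤ α * exp (κ * M / 2) + β * ∑ l ∈ range n, e l (q + 1) * √((M : ℝ) ^ (l + (q + 1))) := by
        gcongr
        exact sqrt_pow_mul_sqrt_pow_div_sqrt_le_exp hκ hMpos n q

theorem gronwall_type_inequality (M : ℕ) (hM : 0 < M) (N : ℕ)
    (α β κ : ℝ) (hα : 0 ≤ α) (hβ : 0 ≤ β) (hκ : 0 ≤ κ)
    (e : ℕ → ℕ → ℝ) (he : ∀ n q, 0 ≤ e n q)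
    (hrec : ∀ n, n ≤ N → ∀ q : ℕ, e n q ≤
      α * Real.sqrt (κ ^ q) / Real.sqrt ((Nat.factorial q : ℝ) * (M : ℝ) ^ n)
      + β * ∑ l ∈ Finset.range n, e l (q + 1) / Real.sqrt ((M : ℝ) ^ (n - 1 - l))) :
    e N 0 ≤ α * Real.exp (κ * M / 2) * (1 + β) ^ N / Real.sqrt ((M : ℝ) ^ N) :=
  gronwall_type_inequality_general M hM N α β κ hα hβ hκ e hrec
end
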